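/- arXiv:1502.00926 — 8 statements merged into one kernel-verified Lean document; each statement's English description precedes it below -/
import Mathlib

section
/- If A is an n×n real Hurwitz matrix (all eigenvalues have strictly negative real part) and Q is an n×n real symmetric positive semidefinite matrix, then the unique solution P of the Lyapunov equation P·A + Aᵀ·P + Q = 0 is given by P = ∫₀^∞ exp(Aᵀ t) Q exp(A t) dt, and this integral converges. -/
/-!
Over `ℂ`, `exp A` is a polynomial in `A`, so the spectral mapping theorem for polynomials and an
eigenvector computation give `σ(exp A) ⊆ exp σ(A)`; for a Hurwitz matrix the spectral radius of
`exp A` is therefore `< 1`. Gelfand's formula bounds `‖(exp A)^k‖` by `C rᵏ` with `r < 1`, and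
writing `exp (t A) = (exp A)^⌊t⌋ exp ((t - ⌊t⌋) A)` gives exponential decay of `exp (t A)`.
Since `F(t) = exp (t Aᵀ) P exp (t A)` satisfies `F' = exp (t Aᵀ) (Aᵀ P + P A) exp (t A)`, which is
`-exp (t Aᵀ) Q exp (t A)` by the Lyapunov equation, and `F` decays, the integral equals `F(0) = P`.
-/

open Filter Asymptotics Topology Set MeasureTheory NormedSpace Polynomial
open scoped NNReal ENNReal

theorem Real.pow_floor_le_inv_mul_rpow {r : ℝ} (hr0 : 0 < r) (hr1 : r ≤ 1) (t : ℝ) :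
    r ^ ⌊t⌋₊ ≤ r⁻¹ * r ^ t := by
  calc r ^ ⌊t⌋₊ = r ^ (⌊t⌋₊ : ℝ) := (Real.rpow_natCast r _).symm
    _ ≤ r ^ (t - 1) :=
        Real.rpow_le_rpow_of_exponent_ge hr0 hr1 (by linarith [Nat.lt_floor_add_one t])
    _ = r⁻¹ * r ^ t := by rw [Real.rpow_sub hr0, Real.rpow_one, div_eq_inv_mul]

section GrowthBound

variable {A : Type*} [NormedRing A] [NormedAlgebra ℂ A] [CompleteSpace A]

theorem isBigO_pow_of_spectralRadius_lt {a : A} {r : ℝ≥0} (h : spectralRadius ℂ a < r) :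
    (fun n : ℕ => a ^ n) =O[atTop] fun n => (r : ℝ) ^ n := by
  refine IsBigO.of_bound 1 ?_
  have hgelfand := spectrum.pow_nnnorm_pow_one_div_tendsto_nhds_spectralRadius a
  filter_upwards [hgelfand.eventually_lt_const h, eventually_gt_atTop 0] with n hn hn0
  rw [one_div, ENNReal.rpow_inv_lt_iff (by positivity), ENNReal.rpow_natCast] at hn
  have : ‖a ^ n‖₊ ≤ r ^ n := by exact_mod_cast hn.le
  simpa using (NNReal.coe_le_coe.2 this)

theorem exists_isBigO_exp_smul_of_spectralRadius_lt_one {b : A}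
    (h : spectralRadius ℂ (exp b) < 1) :
    ∃ ε > 0, (fun t : ℝ => exp ((t : ℂ) • b)) =O[atTop] fun t => Real.exp (-ε * t) := by
  obtain ⟨r, hbr, hr⟩ := ENNReal.lt_iff_exists_nnreal_btwn.mp h
  have hr0 : (0 : ℝ) < r := by simpa using bot_le.trans_lt hbr
  have hr1 : (r : ℝ) < 1 := by exact_mod_cast hr
  refine ⟨-Real.log r, neg_pos.2 (Real.log_neg hr0 hr1), ?_⟩
  let _ : NormedAlgebra ℚ A := NormedAlgebra.restrictScalars ℚ ℂ A
  have hcont : Continuous fun s : ℝ => exp ((s : ℂ) • b) :=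
    exp_continuous.comp (Complex.continuous_ofReal.smul continuous_const)
  obtain ⟨M, hM⟩ := isCompact_Icc.exists_bound_of_continuousOn (hcont.continuousOn (s := Icc 0 1))
  have hfrac : (fun t : ℝ => exp (((t - ⌊t⌋₊ : ℝ) : ℂ) • b)) =O[atTop] fun _ => (1 : ℝ) := by
    refine IsBigO.of_bound M ?_
    filter_upwards [eventually_ge_atTop 0] with t ht
    simpa using hM _ ⟨sub_nonneg.2 (Nat.floor_le ht), by linarith [Nat.lt_floor_add_one t]⟩
  have hfloor : (fun t : ℝ => exp b ^ ⌊t⌋₊) =O[atTop] fun t => Real.exp (-(-Real.log r) * t) := by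
    refine ((isBigO_pow_of_spectralRadius_lt hbr).comp_tendsto tendsto_nat_floor_atTop).trans ?_
    refine IsBigO.of_bound (r : ℝ)⁻¹ ?_
    filter_upwards with t
    rw [neg_neg, ← Real.rpow_def_of_pos hr0]
    simpa [abs_of_pos hr0, abs_of_pos (Real.rpow_pos_of_pos hr0 t)] using
      Real.pow_floor_le_inv_mul_rpow hr0 hr1.le t
  refine ((hfloor.mul hfrac).congr' ?_ (Eventually.of_forall fun t => mul_one _))
  filter_upwards with t
  have hdecomp : (t : ℂ) • b = ⌊t⌋₊ • b + ((t - ⌊t⌋₊ : ℝ) : ℂ) • b := by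
    rw [← Nat.cast_smul_eq_nsmul ℂ, ← add_smul]; push_cast; ring_nf
  rw [hdecomp, NormedSpace.exp_add_of_commute (((Commute.refl b).smul_left _).smul_right _),
    NormedSpace.exp_nsmul]

end GrowthBound

theorem hasDerivAt_exp_smul_mul_mul_exp_smul {𝔸 : Type*} [NormedRing 𝔸] [NormedAlgebra ℝ 𝔸]
    [CompleteSpace 𝔸] (a b x : 𝔸) (t : ℝ) :
    HasDerivAt (fun t : ℝ => exp (t • a) * x * exp (t • b))
      (exp (t • a) * (a * x + x * b) * exp (t • b)) t := by
  refine (((hasDerivAt_exp_smul_const a t).mul_const x).mul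
    (hasDerivAt_exp_smul_const' b t)).congr_deriv ?_
  simp only [mul_add, add_mul, mul_assoc]

theorem integral_Ioi_of_hasDerivAt_of_isBigO_exp_neg {f f' : ℝ → ℝ} {a ε : ℝ} (hε : 0 < ε)
    (hderiv : ∀ t, HasDerivAt f (f' t) t) (hf' : Continuous f')
    (hf : f =O[atTop] fun t => Real.exp (-ε * t)) (hf'O : f' =O[atTop] fun t => Real.exp (-ε * t)) :
    IntegrableOn f' (Ioi a) ∧ ∫ t in Ioi a, f' t = -f a := by
  have hint : IntegrableOn f' (Ioi a) := integrable_of_isBigO_exp_neg hε hf'.continuousOn hf'O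
  have hlim : Tendsto f atTop (𝓝 0) :=
    hf.trans_tendsto (Real.tendsto_exp_atBot.comp
      (tendsto_id.const_mul_atTop_of_neg (neg_neg_of_pos hε)))
  refine ⟨hint, ?_⟩
  rw [integral_Ioi_of_hasDerivAt_of_tendsto' (fun t _ => hderiv t) hint hlim, zero_sub]

namespace Matrix

variable {m n : Type*} [Fintype m] [Fintype n]

-- The Frobenius norm is submultiplicative and invariant under transposition and under the
-- entrywise embedding `ℝ → ℂ`, which is all the comparisons below need.
attribute [local instance] frobeniusNormedAddCommGroup frobeniusNormedSpace

theorem isBigO_apply {𝕜 α : Type*} [RCLike 𝕜] {l : Filter α} {F : α → Matrix m n 𝕜}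
    {g : α → ℝ} (h : F =O[l] g) (i : m) (j : n) : (fun x => F x i j) =O[l] g :=
  ((entryLinearMap 𝕜 𝕜 i j).toContinuousLinearMap.isBigO_comp F l).trans h

theorem hasDerivAt_apply {𝕜 : Type*} [RCLike 𝕜] {F : 𝕜 → Matrix m n 𝕜} {F' : Matrix m n 𝕜}
    {t : 𝕜} (h : HasDerivAt F F' t) (i : m) (j : n) : HasDerivAt (fun t => F t i j) (F' i j) t :=
  (entryLinearMap 𝕜 𝕜 i j).toContinuousLinearMap.hasFDerivAt.comp_hasDerivAt t h

variable [DecidableEq m]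

theorem exp_mem_adjoin_singleton {𝕜 : Type*} [RCLike 𝕜] (B : Matrix m m 𝕜) :
    exp B ∈ Algebra.adjoin 𝕜 {B} :=
  exp_mem (R := 𝕜) (s := Algebra.adjoin 𝕜 {B})
    (Subalgebra.toSubmodule (Algebra.adjoin 𝕜 {B})).closed_of_finiteDimensional
    (Algebra.self_mem_adjoin_singleton 𝕜 B)

attribute [local instance] frobeniusNormedRing frobeniusNormedAlgebra

theorem exp_mulVec_of_mulVec_eq_smul {𝕜 : Type*} [RCLike 𝕜] {B : Matrix m m 𝕜} {μ : 𝕜}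
    {v : m → 𝕜} (hv : B *ᵥ v = μ • v) : exp B *ᵥ v = exp μ • v := by
  let L : Matrix m m 𝕜 →L[𝕜] m → 𝕜 :=
    LinearMap.toContinuousLinearMap ((mulVecBilin 𝕜 𝕜).flip v)
  have hpow (k : ℕ) : B ^ k *ᵥ v = μ ^ k • v := by
    induction k with
    | zero => simp
    | succ k ih => rw [pow_succ', ← mulVec_mulVec, ih, mulVec_smul, hv, smul_smul, ← pow_succ]
  refine ((exp_series_hasSum_exp' (𝕂 := 𝕜) B).mapL L).unique ?_
  simpa [L, smul_mulVec, hpow, smul_smul] using (exp_series_hasSum_exp' (𝕂 := 𝕜) μ).smul_const v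

theorem spectrum_exp_subset (B : Matrix m m ℂ) :
    spectrum ℂ (exp B) ⊆ Complex.exp '' spectrum ℂ B := by
  rcases isEmpty_or_nonempty m with hm | hm
  · simp [spectrum.of_subsingleton]
  obtain ⟨p, hp⟩ : ∃ p : ℂ[X], aeval B p = exp B := by
    simpa [Algebra.adjoin_singleton_eq_range_aeval] using exp_mem_adjoin_singleton B
  rw [← hp, spectrum.map_polynomial_aeval_of_nonempty _ _
    (spectrum.nonempty_of_isAlgClosed_of_finiteDimensional ℂ B)]
  rintro _ ⟨μ, hμ, rfl⟩
  refine ⟨μ, hμ, ?_⟩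
  rw [← AlgEquiv.spectrum_eq toLinAlgEquiv', ← Module.End.hasEigenvalue_iff_mem_spectrum] at hμ
  obtain ⟨v, hv⟩ := hμ.exists_hasEigenvector
  have hpoly : exp B *ᵥ v = p.eval μ • v := by
    rw [← hp, ← toLinAlgEquiv'_apply, ← aeval_algHom_apply,
      Module.End.aeval_apply_of_hasEigenvector hv]
  have hexp := exp_mulVec_of_mulVec_eq_smul (by simpa [toLinAlgEquiv'_apply] using hv.apply_eq_smul)
  rw [Complex.exp_eq_exp_ℂ]
  exact smul_left_injective ℂ hv.2 (hexp.symm.trans hpoly)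

theorem spectralRadius_exp_lt_one {B : Matrix m m ℂ} (hB : ∀ μ ∈ spectrum ℂ B, μ.re < 0) :
    spectralRadius ℂ (exp B) < 1 := by
  rcases isEmpty_or_nonempty m with hm | hm
  · simp [spectralRadius, spectrum.of_subsingleton]
  refine mod_cast spectrum.spectralRadius_lt_of_forall_lt (exp B) (r := 1) fun z hz => ?_
  obtain ⟨μ, hμ, rfl⟩ := spectrum_exp_subset B hz
  rw [← NNReal.coe_lt_coe, coe_nnnorm, Complex.norm_exp]
  exact Real.exp_lt_one_iff.2 (hB μ hμ)

theorem exists_isBigO_exp_smul {A : Matrix m m ℝ}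
    (hA : ∀ μ ∈ spectrum ℂ (A.map Complex.ofReal), μ.re < 0) :
    ∃ ε > 0, (fun t : ℝ => exp (t • A)) =O[atTop] fun t => Real.exp (-ε * t) := by
  have hr : spectralRadius ℂ (exp (A.map Complex.ofReal)) < 1 := spectralRadius_exp_lt_one hA
  obtain ⟨ε, hε, h⟩ := exists_isBigO_exp_smul_of_spectralRadius_lt_one hr
  refine ⟨ε, hε, isBigO_norm_left.1 ((isBigO_norm_left.2 h).congr_left fun t => ?_)⟩
  have hmap : (exp (t • A)).map Complex.ofReal = exp ((t : ℂ) • A.map Complex.ofReal) := by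
    have hΦ : Continuous (Complex.ofRealHom.mapMatrix : Matrix m m ℝ →+* Matrix m m ℂ) :=
      continuous_id.matrix_map Complex.continuous_ofReal
    refine (map_exp _ hΦ (t • A)).trans (congrArg exp ?_)
    ext i j
    simp
  convert frobenius_norm_map_eq (exp (t • A)) _ Complex.norm_real using 2
  exact hmap.symm

theorem isBigO_exp_smul_transpose_mul_mul_exp_smul {A : Matrix m m ℝ} {ε : ℝ}
    (h : (fun t : ℝ => exp (t • A)) =O[atTop] fun t => Real.exp (-ε * t)) (X : Matrix m m ℝ) :
    (fun t : ℝ => exp (t • Aᵀ) * X * exp (t • A)) =O[atTop] fun t => Real.exp (-(2 * ε) * t) := by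
  have hT : (fun t : ℝ => exp (t • Aᵀ)) =O[atTop] fun t => Real.exp (-ε * t) :=
    isBigO_norm_left.1 <| (isBigO_norm_left.2 h).congr_left fun t => by
      rw [← transpose_smul, exp_transpose, frobenius_norm_transpose]
  refine ((hT.mul (isBigO_const_one ℝ X atTop)).mul h).congr_right fun t => ?_
  rw [mul_one, ← Real.exp_add]
  ring_nf

theorem integrableOn_and_integral_exp_smul_transpose_mul_mul_exp_smul_apply
    {A X Y : Matrix m m ℝ} (hA : ∀ μ ∈ spectrum ℂ (A.map Complex.ofReal), μ.re < 0)
    (hXY : X * A + Aᵀ * X + Y = 0) (i j : m) :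
    IntegrableOn (fun t : ℝ => (exp (t • Aᵀ) * Y * exp (t • A)) i j) (Ioi 0) ∧
      ∫ t in Ioi (0 : ℝ), (exp (t • Aᵀ) * Y * exp (t • A)) i j = X i j := by
  obtain ⟨ε, hε, hdecay⟩ := exists_isBigO_exp_smul hA
  have hY : Aᵀ * X + X * A = -Y := by rw [eq_neg_iff_add_eq_zero, add_comm (Aᵀ * X), hXY]
  have hderiv (t : ℝ) := (hasDerivAt_exp_smul_mul_mul_exp_smul Aᵀ A X t).neg.congr_deriv
    (by rw [hY, mul_neg, neg_mul, neg_neg])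
  have hcont : Continuous fun t : ℝ => (exp (t • Aᵀ) * Y * exp (t • A)) i j :=
    continuous_iff_continuousAt.2 fun t =>
      (hasDerivAt_apply (hasDerivAt_exp_smul_mul_mul_exp_smul Aᵀ A Y t) i j).continuousAt
  have h := integral_Ioi_of_hasDerivAt_of_isBigO_exp_neg (a := 0) (by positivity)
    (fun t => hasDerivAt_apply (hderiv t) i j) hcont
    (isBigO_apply (isBigO_exp_smul_transpose_mul_mul_exp_smul hdecay X).neg_left i j)
    (isBigO_apply (isBigO_exp_smul_transpose_mul_mul_exp_smul hdecay Y) i j)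
  refine ⟨h.1, h.2.trans ?_⟩
  simp

end Matrix

open Matrix

theorem lyapunov_solution_integral_general {n : ℕ} (A Q P : Matrix (Fin n) (Fin n) ℝ)
    (hHurwitz : ∀ μ ∈ (A.map (Complex.ofReal)).charpoly.roots, μ.re < 0)
    (hP : P * A + Aᵀ * P + Q = 0) :
    (∀ i j : Fin n, IntegrableOn
        (fun t : ℝ => (NormedSpace.exp (t • Aᵀ) * Q * NormedSpace.exp (t • A)) i j) (Set.Ioi 0)) ∧
    (∀ i j : Fin n,
        P i j = ∫ t in Set.Ioi (0 : ℝ), (NormedSpace.exp (t • Aᵀ) * Q * NormedSpace.exp (t • A)) i j) := by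
  have hspec : ∀ μ ∈ spectrum ℂ (A.map Complex.ofReal), μ.re < 0 := fun μ hμ =>
    hHurwitz μ ((mem_roots (charpoly_monic _).ne_zero).2 (mem_spectrum_iff_isRoot_charpoly.1 hμ))
  have key := integrableOn_and_integral_exp_smul_transpose_mul_mul_exp_smul_apply hspec hP
  exact ⟨fun i j => (key i j).1, fun i j => (key i j).2.symm⟩

/-- If `A` is Hurwitz and `Q` is symmetric positive semidefinite, then the
unique solution `P` of the Lyapunov equation `P·A + Aᵀ·P + Q = 0` is given (entrywise) by the
convergent integral `∫₀^∞ exp(Aᵀ t) Q exp(A t) dt`. -/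
theorem lyapunov_solution_integral {n : ℕ} (A Q P : Matrix (Fin n) (Fin n) ℝ)
    (hHurwitz : ∀ μ ∈ (A.map (Complex.ofReal)).charpoly.roots, μ.re < 0)
    (hQ : Q.PosSemidef)
    (hP : P * A + Aᵀ * P + Q = 0) :
    (∀ i j : Fin n, IntegrableOn
        (fun t : ℝ => (NormedSpace.exp (t • Aᵀ) * Q * NormedSpace.exp (t • A)) i j) (Set.Ioi 0)) ∧
    (∀ i j : Fin n,
        P i j = ∫ t in Set.Ioi (0 : ℝ), (NormedSpace.exp (t • Aᵀ) * Q * NormedSpace.exp (t • A)) i j) :=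
  lyapunov_solution_integral_general A Q P hHurwitz hP
end

section
/- If A is an n×n real normal Hurwitz matrix and Q = q·I with q > 0, then the unique solution P of PA + AᵀP + Q = 0 satisfies trace(P) = -∑_{i=1}^n q / (2·Re(λ_i(A))) = -∑_{i=1}^n q / (2·λ_i(A_s)), where A_s = (A + Aᵀ)/2. -/
/-!
Normality says that `A` commutes with its symmetric part `S = (A + Aᵀ)/2`. In an orthonormal
eigenbasis of `S`, `A` is therefore block diagonal along the eigenspaces of `S`, and on the block
of the eigenvalue `ν` the Hermitian part is `ν • 1`, so every eigenvalue of that block has real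
part `ν`. Hence the real parts of the eigenvalues of `A` are the eigenvalues of `S`, with
multiplicities. In particular `S` is invertible, and multiplying the Lyapunov equation on the right
by `S⁻¹`, which commutes with `A`, and taking traces gives `2 tr P = -q tr S⁻¹ = -q ∑ 1/ν`.
-/

open Polynomial
open scoped ComplexOrder

theorem Multiset.bind_image_replicate_card_fiber {ι α : Type*} [Fintype ι] [DecidableEq α]
    (f : ι → α) :
    (Finset.univ.image f).val.bind (fun a => replicate (Fintype.card {i // f i = a}) a) =
      Finset.univ.val.map f := by
  have hfiber : ∀ a, replicate (Fintype.card {i // f i = a}) a =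
      ∑ i with f i = a, ({f i} : Multiset α) := by
    intro a
    rw [Finset.sum_congr rfl fun i hi => by rw [(Finset.mem_filter.mp hi).2],
      Finset.sum_const, Fintype.card_subtype, nsmul_singleton]
  rw [Multiset.bind, Multiset.join, ← Finset.sum_eq_multiset_sum,
    Finset.sum_congr rfl fun a _ => hfiber a,
    Finset.sum_fiberwise_of_maps_to fun i _ => Finset.mem_image_of_mem f (Finset.mem_univ i),
    ← Multiset.sum_map_singleton (Finset.univ.val.map f), Multiset.map_map]
  rfl

namespace Matrix

theorem toSquareBlock_add_conjTranspose_eq {n : Type*} [DecidableEq n] {B : Matrix n n ℂ}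
    {ν : n → ℝ} (hsum : B + Bᴴ = (2 : ℂ) • diagonal (fun i => (ν i : ℂ))) (a : ℝ) :
    B.toSquareBlock ν a + (B.toSquareBlock ν a)ᴴ = (2 * a : ℂ) • 1 := by
  ext i j
  have hij := congrFun (congrFun hsum i) j
  simp only [add_apply, conjTranspose_apply, smul_apply, smul_eq_mul] at hij
  rcases eq_or_ne i j with rfl | hne
  · simpa [toSquareBlock_def, i.prop] using hij
  · simpa [toSquareBlock_def, hne, Subtype.val_injective.ne hne] using hij

variable {n : Type*} [Fintype n] [DecidableEq n]

theorem exists_mulVec_eq_smul_of_isRoot_charpoly {K : Type*} [Field K] {C : Matrix n n K} {μ : K}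
    (hμ : C.charpoly.IsRoot μ) : ∃ x : n → K, x ≠ 0 ∧ C *ᵥ x = μ • x := by
  rw [← charpoly_toLin', ← Module.End.hasEigenvalue_iff_isRoot_charpoly] at hμ
  obtain ⟨x, hx⟩ := hμ.exists_hasEigenvector
  exact ⟨x, hx.2, by simpa using hx.apply_eq_smul⟩

theorem re_eq_of_isRoot_charpoly_of_add_conjTranspose_eq {C : Matrix n n ℂ} {a : ℝ}
    (hC : C + Cᴴ = (2 * a : ℂ) • 1) {μ : ℂ} (hμ : C.charpoly.IsRoot μ) : μ.re = a := by
  obtain ⟨x, hx0, hx⟩ := exists_mulVec_eq_smul_of_isRoot_charpoly hμ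
  have hs : star x ⬝ᵥ x ≠ 0 := fun h => hx0 (dotProduct_star_self_eq_zero.mp h)
  have hC_form : star x ⬝ᵥ (C *ᵥ x) = μ * (star x ⬝ᵥ x) := by
    rw [hx, dotProduct_smul, smul_eq_mul]
  have hCH_form : star x ⬝ᵥ (Cᴴ *ᵥ x) = star μ * (star x ⬝ᵥ x) := by
    rw [star_dotProduct, star_mulVec, conjTranspose_conjTranspose, ← dotProduct_mulVec,
      hC_form, star_mul', ← star_dotProduct]
  have hsum : (2 * a : ℂ) * (star x ⬝ᵥ x) = (μ + star μ) * (star x ⬝ᵥ x) := by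
    rw [add_mul, ← hC_form, ← hCH_form, ← dotProduct_add, ← add_mulVec, hC, smul_mulVec,
      one_mulVec, dotProduct_smul, smul_eq_mul]
  have h := mul_right_cancel₀ hs hsum
  rw [Complex.star_def, Complex.add_conj] at h
  have : 2 * a = 2 * μ.re := by exact_mod_cast h
  linarith

theorem roots_charpoly_map_re_of_blockTriangular {B : Matrix n n ℂ} {ν : n → ℝ}
    (hB : B.BlockTriangular ν)
    (hsum : B + Bᴴ = (2 : ℂ) • diagonal (fun i => (ν i : ℂ))) :
    B.charpoly.roots.map Complex.re = Finset.univ.val.map ν := by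
  have hblock : ∀ a, (B.toSquareBlock ν a).charpoly.roots.map Complex.re =
      Multiset.replicate (Fintype.card {i // ν i = a}) a := by
    intro a
    refine Multiset.eq_replicate.mpr ⟨?_, fun b hb => ?_⟩
    · rw [Multiset.card_map, splits_iff_card_roots.mp (IsAlgClosed.splits _),
        charpoly_natDegree_eq_dim]
    · obtain ⟨μ, hμ, rfl⟩ := Multiset.mem_map.mp hb
      exact re_eq_of_isRoot_charpoly_of_add_conjTranspose_eq
        (toSquareBlock_add_conjTranspose_eq hsum a) (isRoot_of_mem_roots hμ)
  rw [hB.charpoly,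
    roots_prod _ _ (Finset.prod_ne_zero_iff.mpr fun a _ => (charpoly_monic _).ne_zero),
    Multiset.map_bind, Multiset.bind_congr fun a _ => hblock a]
  exact Multiset.bind_image_replicate_card_fiber ν

theorem apply_eq_zero_of_commute_diagonal {R : Type*} [CommRing R] [IsDomain R]
    {B : Matrix n n R} {d : n → R} (h : Commute B (diagonal d)) {i j : n}
    (hij : d i ≠ d j) : B i j = 0 := by
  have hentry : B i j * d j = d i * B i j := by
    simpa [mul_diagonal, diagonal_mul] using congrFun (congrFun h.eq i) j
  have : (d j - d i) * B i j = 0 := by linear_combination hentry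
  exact (mul_eq_zero.mp this).resolve_left (sub_ne_zero.mpr hij.symm)

theorem roots_charpoly_map_re_eq_of_commute {A H : Matrix n n ℂ}
    (hH : H.IsHermitian) (hsum : A + Aᴴ = (2 : ℂ) • H) (hAH : Commute A H) :
    A.charpoly.roots.map Complex.re = H.charpoly.roots.map Complex.re := by
  have hspec := hH.spectral_theorem
  rw [Unitary.conjStarAlgAut_apply] at hspec
  set U : Matrix n n ℂ := (hH.eigenvectorUnitary : Matrix n n ℂ)
  set D : Matrix n n ℂ := diagonal (fun i => (hH.eigenvalues i : ℂ))
  have hUU : star U * U = 1 := Unitary.coe_star_mul_self _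
  have hUU' : U * star U = 1 := Unitary.coe_mul_star_self _
  have hD : star U * H * U = D := by
    rw [hspec, ← mul_assoc, ← mul_assoc, hUU, one_mul, mul_assoc, hUU, mul_one]
    rfl
  set B := star U * A * U with hB
  have hcharpoly : B.charpoly = A.charpoly := by
    rw [hB, mul_assoc, charpoly_mul_comm, mul_assoc, hUU', mul_one]
  have hBsum : B + Bᴴ = (2 : ℂ) • D := by
    rw [← hD, ← smul_mul_assoc, ← mul_smul_comm, ← hsum]
    simp only [B, conjTranspose_mul, star_eq_conjTranspose, conjTranspose_conjTranspose]
    noncomm_ring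
  have hBD : Commute B D := by
    rw [← hD]
    show B * (star U * H * U) = star U * H * U * B
    calc B * (star U * H * U) = star U * (A * H) * U := by
          simp only [B, mul_assoc, ← mul_assoc U (star U), hUU', one_mul]
      _ = star U * (H * A) * U := by rw [hAH.eq]
      _ = star U * H * U * B := by
          simp only [B, mul_assoc, ← mul_assoc U (star U), hUU', one_mul]
  have hBT : B.BlockTriangular hH.eigenvalues := fun i j hij =>
    apply_eq_zero_of_commute_diagonal hBD (by exact_mod_cast hij.ne')
  rw [← hcharpoly, roots_charpoly_map_re_of_blockTriangular hBT hBsum,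
    hH.roots_charpoly_eq_eigenvalues, Multiset.map_map]
  simp

theorem IsHermitian.trace_inv {𝕜 : Type*} [RCLike 𝕜] {S : Matrix n n 𝕜}
    (hS : S.IsHermitian) (h : ∀ i, hS.eigenvalues i ≠ 0) :
    S⁻¹.trace = ∑ i, ((hS.eigenvalues i : 𝕜))⁻¹ := by
  have hspec := hS.spectral_theorem
  rw [Unitary.conjStarAlgAut_apply] at hspec
  set U : Matrix n n 𝕜 := (hS.eigenvectorUnitary : Matrix n n 𝕜)
  have hUU : star U * U = 1 := Unitary.coe_star_mul_self _
  have hUU' : U * star U = 1 := Unitary.coe_mul_star_self _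
  set d : n → 𝕜 := RCLike.ofReal ∘ hS.eigenvalues
  have hd : diagonal d * diagonal (fun i => (d i)⁻¹) = 1 := by
    rw [diagonal_mul_diagonal, ← diagonal_one]
    exact congrArg diagonal (funext fun i => mul_inv_cancel₀ (by simpa [d] using h i))
  have hinv : S⁻¹ = U * diagonal (fun i => (d i)⁻¹) * star U := by
    apply inv_eq_right_inv
    rw [hspec]
    calc U * diagonal d * star U * (U * diagonal (fun i => (d i)⁻¹) * star U)
        = U * (diagonal d * (star U * U) * diagonal (fun i => (d i)⁻¹)) * star U := by
          simp only [mul_assoc]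
      _ = 1 := by rw [hUU, mul_one, hd, mul_one, hUU']
  rw [hinv, trace_mul_cycle, hUU, one_mul, trace_diagonal]
  rfl

theorem trace_lyapunov_mul_inv_eq_two_mul_trace {R : Type*} [CommRing R] {A H : Matrix n n R}
    (P : Matrix n n R) (hAH : Commute A H)
    (hsum : A + Aᵀ = (2 : R) • H) (hH : IsUnit H.det) :
    ((P * A + Aᵀ * P) * H⁻¹).trace = 2 * P.trace := by
  have hAHinv : A * H⁻¹ = H⁻¹ * A := by
    calc A * H⁻¹ = H⁻¹ * (H * A) * H⁻¹ := by
          rw [← mul_assoc, nonsing_inv_mul _ hH, one_mul]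
      _ = H⁻¹ * A := by rw [← hAH.eq, mul_assoc, mul_assoc, mul_nonsing_inv _ hH, mul_one]
  calc ((P * A + Aᵀ * P) * H⁻¹).trace = (P * (A * H⁻¹) + P * (H⁻¹ * Aᵀ)).trace := by
        rw [add_mul, trace_add, trace_add, mul_assoc, mul_assoc, trace_mul_comm Aᵀ, mul_assoc]
    _ = (P * H⁻¹ * (A + Aᵀ)).trace := by rw [hAHinv, mul_assoc, mul_add, mul_add]
    _ = 2 * P.trace := by
        rw [hsum, mul_smul_comm, mul_assoc, nonsing_inv_mul _ hH, mul_one, trace_smul, smul_eq_mul]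

theorem roots_charpoly_map_ofReal_map_re_eq {A S : Matrix n n ℝ} (hS : S.IsHermitian)
    (hsum : A + Aᵀ = (2 : ℝ) • S) (hAS : Commute A S) :
    (A.map Complex.ofReal).charpoly.roots.map Complex.re = S.charpoly.roots := by
  have hSc : (S.map Complex.ofReal).IsHermitian := hS.map _ fun _ => by simp
  have hsumc :
      A.map Complex.ofReal + (A.map Complex.ofReal)ᴴ = (2 : ℂ) • S.map Complex.ofReal := by
    ext i j
    simpa using congrArg Complex.ofReal (congrFun (congrFun hsum i) j)
  have hASc : Commute (A.map Complex.ofReal) (S.map Complex.ofReal) :=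
    hAS.map Complex.ofRealHom.mapMatrix
  have hcharpoly : (S.map Complex.ofReal).charpoly = S.charpoly.map Complex.ofRealHom :=
    S.charpoly_map Complex.ofRealHom
  rw [roots_charpoly_map_re_eq_of_commute hSc hsumc hASc, hcharpoly, hS.splits_charpoly.roots_map,
    Multiset.map_map]
  simp

theorem trace_eq_neg_sum_roots_of_lyapunov {A S P : Matrix n n ℝ} {q : ℝ} (hS : S.IsHermitian)
    (hS0 : ∀ ν ∈ S.charpoly.roots, ν ≠ 0) (hsum : A + Aᵀ = (2 : ℝ) • S)
    (hAS : Commute A S) (hP : P * A + Aᵀ * P + q • (1 : Matrix n n ℝ) = 0) :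
    P.trace = -(S.charpoly.roots.map fun ν => q / (2 * ν)).sum := by
  have hSroots : S.charpoly.roots = Finset.univ.val.map hS.eigenvalues := by
    simpa using hS.roots_charpoly_eq_eigenvalues
  have hν : ∀ i, hS.eigenvalues i ≠ 0 := fun i =>
    hS0 _ (hSroots ▸ Multiset.mem_map_of_mem _ (Finset.mem_univ_val i))
  have hdet : IsUnit S.det := by
    rw [hS.det_eq_prod_eigenvalues, isUnit_iff_ne_zero]
    exact Finset.prod_ne_zero_iff.mpr fun i _ => by simpa using hν i
  have htrace : 2 * P.trace = -q * ∑ i, (hS.eigenvalues i)⁻¹ := by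
    rw [← trace_lyapunov_mul_inv_eq_two_mul_trace P hAS hsum hdet,
      eq_neg_of_add_eq_zero_left hP, neg_mul, smul_mul_assoc, one_mul, trace_neg, trace_smul,
      hS.trace_inv hν]
    simp
  rw [hSroots, Multiset.map_map]
  change P.trace = -∑ i, q / (2 * hS.eigenvalues i)
  rw [Finset.sum_congr rfl fun i _ =>
    show q / (2 * hS.eigenvalues i) = q / 2 * (hS.eigenvalues i)⁻¹ by ring, ← Finset.mul_sum]
  linarith

end Matrix

open Matrix

theorem trace_lyapunov_normal_general {n : ℕ} (A P : Matrix (Fin n) (Fin n) ℝ) (q : ℝ)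
    (hNormal : Aᵀ * A = A * Aᵀ)
    (hHurwitz : ∀ μ ∈ (A.map (Complex.ofReal)).charpoly.roots, μ.re < 0)
    (hP : P * A + Aᵀ * P + q • (1 : Matrix (Fin n) (Fin n) ℝ) = 0) :
    P.trace =
        -((A.map (Complex.ofReal)).charpoly.roots.map (fun μ => q / (2 * μ.re))).sum ∧
    P.trace =
        -((((2 : ℝ)⁻¹ • (A + Aᵀ)).charpoly.roots.map (fun ν => q / (2 * ν))).sum) := by
  set S : Matrix (Fin n) (Fin n) ℝ := (2 : ℝ)⁻¹ • (A + Aᵀ)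
  have hsum : A + Aᵀ = (2 : ℝ) • S := by rw [smul_smul]; norm_num
  have hS : S.IsHermitian := by simp [S, IsHermitian, add_comm]
  have hAS : Commute A S := by
    show A * S = S * A
    rw [mul_smul_comm, smul_mul_assoc, mul_add, add_mul, hNormal]
  have hroots := roots_charpoly_map_ofReal_map_re_eq hS hsum hAS
  have hS0 : ∀ ν ∈ S.charpoly.roots, ν ≠ 0 := by
    rw [← hroots]
    intro ν hν
    obtain ⟨μ, hμ, rfl⟩ := Multiset.mem_map.mp hν
    exact (hHurwitz μ hμ).ne
  have htrace := trace_eq_neg_sum_roots_of_lyapunov hS hS0 hsum hAS hP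
  refine ⟨?_, htrace⟩
  rw [htrace, ← hroots, Multiset.map_map]
  rfl

/-- For `A` normal and Hurwitz and `Q = q·I` with `q > 0`, the unique
solution `P` of `P·A + Aᵀ·P + q·I = 0` satisfies
`trace(P) = -∑ᵢ q/(2 Re λᵢ(A)) = -∑ᵢ q/(2 λᵢ(A_s))`, `A_s = (A + Aᵀ)/2`. -/
theorem trace_lyapunov_normal {n : ℕ} (A P : Matrix (Fin n) (Fin n) ℝ) (q : ℝ) (hq : 0 < q)
    (hNormal : Aᵀ * A = A * Aᵀ)
    (hHurwitz : ∀ μ ∈ (A.map (Complex.ofReal)).charpoly.roots, μ.re < 0)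
    (hP : P * A + Aᵀ * P + q • (1 : Matrix (Fin n) (Fin n) ℝ) = 0) :
    P.trace =
        -((A.map (Complex.ofReal)).charpoly.roots.map (fun μ => q / (2 * μ.re))).sum ∧
    P.trace =
        -((((2 : ℝ)⁻¹ • (A + Aᵀ)).charpoly.roots.map (fun ν => q / (2 * ν))).sum) :=
  trace_lyapunov_normal_general A P q hNormal hHurwitz hP
end

section
/- Let Γ be an n×n complex diagonal matrix and N strictly upper triangular. Then for every t ≥ 0, trace(exp((Γ+N)t)ᴴ · exp((Γ+N)t)) ≥ trace(exp((Γᴴ+Γ)t)) = ∑_{i=1}^n e^{2 Re(Γ_{ii}) t}. -/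
/-!
The diagonal of a product of upper triangular matrices is the product of the diagonals, so the
diagonal commutes with the exponential series on upper triangular matrices: `exp (t • (Γ + N))` has
diagonal entries `e^{t Γᵢᵢ}`. Since `trace (Eᴴ * E)` is the sum of the squared moduli of all
entries of `E`, it dominates the sum of `|e^{t Γᵢᵢ}|² = e^{2 Re(Γᵢᵢ) t}`. The same diagonal
computation for the diagonal matrix `t • (Γᴴ + Γ)` gives the trace identity.
-/

open Matrix NormedSpace Real

namespace Matrix

variable {m : Type*}

theorem IsDiag.isUpperTriangular {R : Type*} [Preorder m] [Zero R] {A : Matrix m m R}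
    (hA : A.IsDiag) : A.IsUpperTriangular :=
  fun _ _ hij => hA hij.ne'

variable [Fintype m]

theorem re_trace_conjTranspose_mul_self {n 𝕂 : Type*} [Fintype n] [RCLike 𝕂]
    (A : Matrix n m 𝕂) : RCLike.re (Aᴴ * A).trace = ∑ i, ∑ j, ‖A j i‖ ^ 2 := by
  simp only [trace, diag, mul_apply, conjTranspose_apply, map_sum, RCLike.star_def,
    RCLike.conj_mul, ← RCLike.ofReal_pow, RCLike.ofReal_re]

theorem sum_norm_diag_sq_le_re_trace_conjTranspose_mul_self {𝕂 : Type*} [RCLike 𝕂]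
    (A : Matrix m m 𝕂) : ∑ i, ‖A i i‖ ^ 2 ≤ RCLike.re (Aᴴ * A).trace := by
  rw [re_trace_conjTranspose_mul_self]
  exact Finset.sum_le_sum fun i _ =>
    Finset.single_le_sum (f := fun j => ‖A j i‖ ^ 2) (fun _ _ => by positivity)
      (Finset.mem_univ i)

variable [LinearOrder m]

theorem IsUpperTriangular.diag_mul {R : Type*} [NonUnitalNonAssocSemiring R]
    {A B : Matrix m m R} (hA : A.IsUpperTriangular) (hB : B.IsUpperTriangular) :
    (A * B).diag = A.diag * B.diag := by
  ext i
  refine (Finset.sum_eq_single i (fun k _ hki => ?_) (by simp)).trans rfl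
  change A i k * B k i = 0
  rcases hki.lt_or_gt with hki | hki
  · rw [hA hki, zero_mul]
  · rw [hB hki, mul_zero]

variable [DecidableEq m]

theorem IsUpperTriangular.diag_pow {R : Type*} [Semiring R] {A : Matrix m m R}
    (hA : A.IsUpperTriangular) (k : ℕ) : (A ^ k).diag = A.diag ^ k := by
  induction k with
  | zero => simp
  | succ k ih => rw [pow_succ, IsUpperTriangular.diag_mul (hA.pow k) hA, ih, pow_succ]

attribute [local instance] Matrix.linftyOpNormedRing Matrix.linftyOpNormedAlgebra in
theorem IsUpperTriangular.diag_exp {𝕂 : Type*} [RCLike 𝕂] {A : Matrix m m 𝕂}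
    (hA : A.IsUpperTriangular) : (exp A).diag = exp A.diag := by
  have hsum : HasSum (fun k : ℕ => (k.factorial⁻¹ : 𝕂) • (A ^ k).diag) (exp A).diag := by
    rw [exp_eq_tsum 𝕂]
    exact (expSeries_summable' A).hasSum.mapL (diagLinearMap m 𝕂 𝕂).toContinuousLinearMap
  simp_rw [hA.diag_pow] at hsum
  rw [hsum.tsum_eq.symm, exp_eq_tsum 𝕂]

theorem IsUpperTriangular.trace_exp {𝕂 : Type*} [RCLike 𝕂] {A : Matrix m m 𝕂}
    (hA : A.IsUpperTriangular) : (exp A).trace = ∑ i, exp (A i i) := by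
  simp [trace, ← diag_apply, hA.diag_exp]

end Matrix

theorem Complex.norm_exp_ofReal_mul_sq (t : ℝ) (z : ℂ) :
    ‖Complex.exp (t * z)‖ ^ 2 = Real.exp (2 * z.re * t) := by
  rw [Complex.norm_exp, ← Real.exp_nat_mul, Complex.re_ofReal_mul]
  ring_nf

theorem Complex.exp_smul_conj_add_self (t : ℝ) (z : ℂ) :
    Complex.exp (t • (star z + z)) = Real.exp (2 * z.re * t) := by
  rw [Complex.star_def, add_comm, Complex.add_conj, Complex.real_smul, Complex.ofReal_exp]
  push_cast
  ring_nf

theorem trace_exp_triangular_lower_bound_general {n : ℕ} (Γ N : Matrix (Fin n) (Fin n) ℂ)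
    (hΓ : Γ.IsDiag) (hN : ∀ i j : Fin n, j ≤ i → N i j = 0) (t : ℝ) :
    (((exp (t • (Γ + N)))ᴴ * exp (t • (Γ + N))).trace).re ≥
      ∑ i : Fin n, Real.exp (2 * (Γ i i).re * t) ∧
    (exp (t • (Γᴴ + Γ))).trace = ∑ i : Fin n, (Real.exp (2 * (Γ i i).re * t) : ℂ) := by
  have hA : (t • (Γ + N)).IsUpperTriangular := fun i j hij => by
    simp [hΓ.isUpperTriangular hij, hN i j (le_of_lt hij)]
  have hdiag (i : Fin n) : exp (t • (Γ + N)) i i = Complex.exp (t * Γ i i) := by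
    refine (congr_fun hA.diag_exp i).trans ?_
    rw [Pi.exp_def, ← Complex.exp_eq_exp_ℂ]
    simp [hN i i le_rfl, Complex.real_smul]
  constructor
  · calc ∑ i, Real.exp (2 * (Γ i i).re * t) = ∑ i, ‖exp (t • (Γ + N)) i i‖ ^ 2 := by
          simp only [hdiag, Complex.norm_exp_ofReal_mul_sq]
      _ ≤ _ := sum_norm_diag_sq_le_re_trace_conjTranspose_mul_self _
  · rw [((hΓ.conjTranspose.add hΓ).smul t).isUpperTriangular.trace_exp]
    refine Finset.sum_congr rfl fun i _ => ?_
    rw [← Complex.exp_eq_exp_ℂ, ← Complex.exp_smul_conj_add_self]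
    rfl

/-- For `Γ` diagonal and `N` strictly upper triangular and `t ≥ 0`,
`trace(exp((Γ+N)t)ᴴ exp((Γ+N)t)) ≥ trace(exp((Γᴴ+Γ)t)) = ∑ᵢ e^{2 Re(Γᵢᵢ) t}`. -/
theorem trace_exp_triangular_lower_bound {n : ℕ} (Γ N : Matrix (Fin n) (Fin n) ℂ)
    (hΓ : Γ.IsDiag) (hN : ∀ i j : Fin n, j ≤ i → N i j = 0) (t : ℝ) (ht : 0 ≤ t) :
    (((exp (t • (Γ + N)))ᴴ * exp (t • (Γ + N))).trace).re ≥
      ∑ i : Fin n, Real.exp (2 * (Γ i i).re * t) ∧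
    (exp (t • (Γᴴ + Γ))).trace = ∑ i : Fin n, (Real.exp (2 * (Γ i i).re * t) : ℂ) :=
  trace_exp_triangular_lower_bound_general Γ N hΓ hN t
end

section
/- Let n ≥ 1, a, c > 0, and let A be the n×n cyclic matrix with -a on the diagonal, c on the subdiagonal, and -c in the upper-right corner. Then A is Hurwitz (all eigenvalues have negative real part) if and only if a/c > cos(π/n). -/
/-!
For `n ≥ 2`, expanding along the first row (both complementary minors are triangular) gives
the characteristic polynomial `(X + a) ^ n + c ^ n`, whose roots are `c ζ - a` with `ζ ^ n = -1`.
Writing `ζ = exp (i θ)` with `|θ| ≤ π`, `n θ` is an odd multiple of `π`, so `|θ| ≥ π / n` and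
`re ζ ≤ cos (π / n)`, with equality at `ζ = exp (i π / n)`. Hence all roots have negative real
part iff `c cos (π / n) < a`. For `n = 1` the matrix is `(-a)` and both sides hold.
-/

open Matrix Polynomial Real

-- For `n = 1` the diagonal entry `d` takes precedence over the corner entry `t`.
def cyclicMatrix {R : Type*} [Zero R] (n : ℕ) (d s t : R) : Matrix (Fin n) (Fin n) R :=
  Matrix.of fun i j : Fin n =>
    if i = j then d
    else if (i : ℕ) = (j : ℕ) + 1 then s
    else if (i : ℕ) = 0 ∧ (j : ℕ) = n - 1 then t
    else 0

section CyclicMatrix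

variable {R : Type*} {n : ℕ}

theorem cyclicMatrix_map [Zero R] {S : Type*} [Zero S] {d s t : R} (f : R → S) (hf : f 0 = 0) :
    (cyclicMatrix n d s t).map f = cyclicMatrix n (f d) (f s) (f t) := by
  ext i j
  simp only [cyclicMatrix, map_apply, of_apply]
  split_ifs <;> simp only [hf]

variable [CommRing R]

theorem charmatrix_cyclicMatrix (d s t : R) :
    charmatrix (cyclicMatrix n d s t) = cyclicMatrix n (X - C d) (-C s) (-C t) := by
  refine Matrix.ext fun i j => ?_
  by_cases hij : i = j
  · subst hij
    simp [cyclicMatrix]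
  · rw [charmatrix_apply_ne _ _ _ hij]
    simp only [cyclicMatrix, of_apply, if_neg hij]
    split_ifs <;> simp

theorem charpoly_cyclicMatrix_one (d s t : R) : (cyclicMatrix 1 d s t).charpoly = X - C d := by
  rw [charpoly, det_unique, charmatrix_apply_eq]
  simp [cyclicMatrix]

variable (m : ℕ) (d s t : R)

theorem det_cyclicMatrix_submatrix_succ_succ :
    ((cyclicMatrix (m + 2) d s t).submatrix Fin.succ Fin.succ).det = d ^ (m + 1) := by
  rw [det_of_isLowerTriangular]
  · simp only [cyclicMatrix, submatrix_apply, of_apply, if_true, Finset.prod_const,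
      Finset.card_univ, Fintype.card_fin]
  · intro i j hij
    replace hij : (i : ℕ) < j := hij
    simp only [cyclicMatrix, submatrix_apply, of_apply, Fin.ext_iff, Fin.val_succ]
    rw [if_neg (by omega), if_neg (by omega), if_neg (by omega)]

theorem det_cyclicMatrix_submatrix_succ_castSucc :
    ((cyclicMatrix (m + 2) d s t).submatrix Fin.succ Fin.castSucc).det = s ^ (m + 1) := by
  rw [det_of_isUpperTriangular]
  · simp only [cyclicMatrix, submatrix_apply, of_apply, Fin.ext_iff, Fin.val_succ,
      Fin.val_castSucc, Nat.succ_ne_self, if_false, if_true, Finset.prod_const,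
      Finset.card_univ, Fintype.card_fin]
  · intro i j hij
    replace hij : (j : ℕ) < i := hij
    simp only [cyclicMatrix, submatrix_apply, of_apply, Fin.ext_iff, Fin.val_succ,
      Fin.val_castSucc]
    rw [if_neg (by omega), if_neg (by omega), if_neg (by omega)]

theorem det_cyclicMatrix :
    (cyclicMatrix (m + 2) d s t).det = d ^ (m + 2) + (-1) ^ (m + 1) * t * s ^ (m + 1) := by
  rw [det_succ_row_zero, Finset.sum_eq_add_of_mem 0 (Fin.last (m + 1)) (Finset.mem_univ _)
    (Finset.mem_univ _) (Fin.last_pos).ne]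
  · rw [Fin.succAbove_zero, Fin.succAbove_last, det_cyclicMatrix_submatrix_succ_succ,
      det_cyclicMatrix_submatrix_succ_castSucc]
    have h00 : cyclicMatrix (m + 2) d s t 0 0 = d := by
      simp only [cyclicMatrix, of_apply, if_true]
    have h0last : cyclicMatrix (m + 2) d s t 0 (Fin.last (m + 1)) = t := by
      simp only [cyclicMatrix, of_apply, Fin.val_zero, Fin.val_last]
      rw [if_neg Fin.last_pos.ne, if_neg (by omega), if_pos ⟨trivial, rfl⟩]
    rw [h00, h0last, Fin.val_zero, Fin.val_last]
    ring
  · intro j _ hj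
    have hjlast : (j : ℕ) ≠ m + 1 := Fin.val_ne_iff.mpr hj.2
    have hentry : cyclicMatrix (m + 2) d s t 0 j = 0 := by
      simp only [cyclicMatrix, of_apply, Fin.val_zero]
      rw [if_neg (Ne.symm hj.1), if_neg (by omega), if_neg (by omega)]
    rw [hentry, mul_zero, zero_mul]

theorem charpoly_cyclicMatrix :
    (cyclicMatrix (m + 2) d s t).charpoly = (X - C d) ^ (m + 2) - C (t * s ^ (m + 1)) := by
  have hsign : (-1 : R[X]) ^ (m + 1) * (-C s) ^ (m + 1) = C s ^ (m + 1) := by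
    rw [← mul_pow, neg_one_mul, neg_neg]
  rw [charpoly, charmatrix_cyclicMatrix, det_cyclicMatrix, C_mul, C_pow]
  linear_combination (-C t) * hsign

end CyclicMatrix

theorem Polynomial.mem_roots_X_sub_C_pow_sub_C {K : Type*} [CommRing K] [IsDomain K] {n : ℕ}
    (hn : n ≠ 0) {d r μ : K} : μ ∈ ((X - C d) ^ n - C r).roots ↔ (μ - d) ^ n = r := by
  have hmonic : ((X - C d) ^ n - C r).Monic :=
    ((monic_X_sub_C d).pow n).sub_of_left <| by
      rw [degree_pow, degree_X_sub_C, nsmul_one]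
      exact degree_C_le.trans_lt (by exact_mod_cast Nat.pos_of_ne_zero hn)
  simp [mem_roots hmonic.ne_zero, sub_eq_zero]

namespace Complex

theorem re_le_cos_pi_div_of_pow_eq_neg_one {n : ℕ} (hn : n ≠ 0) {ζ : ℂ} (h : ζ ^ n = -1) :
    ζ.re ≤ Real.cos (π / n) := by
  have hnorm : ‖ζ‖ = 1 :=
    (pow_eq_one_iff_of_nonneg (norm_nonneg ζ) hn).mp (by rw [← norm_pow, h, norm_neg, norm_one])
  obtain ⟨θ, hθ, rfl⟩ : ∃ θ : ℝ, |θ| ≤ π ∧ exp (θ * I) = ζ :=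
    ⟨arg ζ, abs_arg_le_pi ζ, by simpa [hnorm] using norm_mul_exp_arg_mul_I ζ⟩
  obtain ⟨k, hk⟩ : ∃ k : ℤ, π + k * (2 * π) = n * θ := by
    rw [← Real.cos_eq_neg_one_iff, ← exp_ofReal_mul_I_re,
      show ((n * θ : ℝ) * I : ℂ) = n * (θ * I) by push_cast; ring, exp_nat_mul, h, neg_re, one_re]
  have hodd : (1 : ℝ) ≤ |2 * (k : ℝ) + 1| := by
    exact_mod_cast Int.one_le_abs (by omega : 2 * k + 1 ≠ 0)
  have hθ_ge : π / n ≤ |θ| := by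
    rw [div_le_iff₀ (by positivity)]
    calc π ≤ π * |2 * (k : ℝ) + 1| := le_mul_of_one_le_right pi_pos.le hodd
      _ = |π + k * (2 * π)| := by
        rw [show π + k * (2 * π) = π * (2 * k + 1) by ring, abs_mul, abs_of_pos pi_pos]
      _ = |θ| * n := by rw [hk, abs_mul, Nat.abs_cast, mul_comm]
  rw [exp_ofReal_mul_I_re, ← Real.cos_abs]
  exact Real.cos_le_cos_of_nonneg_of_le_pi (by positivity) hθ hθ_ge

theorem exp_pi_div_mul_I_pow {n : ℕ} (hn : n ≠ 0) : exp ((π / n : ℝ) * I) ^ n = -1 := by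
  rw [← exp_nat_mul, ← exp_pi_mul_I]
  congr 1
  push_cast
  field_simp

theorem forall_add_pow_eq_neg_pow_re_neg_iff {n : ℕ} (hn : n ≠ 0) {c : ℝ} (hc : 0 < c) (a : ℝ) :
    (∀ μ : ℂ, (μ + a) ^ n = -(c : ℂ) ^ n → μ.re < 0) ↔ c * Real.cos (π / n) < a := by
  constructor
  · intro h
    have hroot := h (c * exp ((π / n : ℝ) * I) - a) <| by
      rw [sub_add_cancel, mul_pow, exp_pi_div_mul_I_pow hn, mul_neg_one]
    rw [sub_re, re_ofReal_mul, exp_ofReal_mul_I_re, ofReal_re] at hroot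
    linarith
  · intro h μ hμ
    have hζ : ((μ + a) / c) ^ n = -1 := by
      rw [div_pow, hμ, neg_div, div_self (pow_ne_zero n (ofReal_ne_zero.mpr hc.ne'))]
    have hre : μ.re + a = c * ((μ + a) / c).re := by
      rw [div_ofReal_re, add_re, ofReal_re]
      field_simp
    have hcos := mul_le_mul_of_nonneg_left (re_le_cos_pi_div_of_pow_eq_neg_one hn hζ) hc.le
    linarith

end Complex

/-- The `n×n` cyclic matrix (`-a` diagonal, `c` subdiagonal, `-c` corner,
`a, c > 0`) is Hurwitz if and only if `a/c > cos(π/n)`. -/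
theorem cyclic_matrix_hurwitz_iff {n : ℕ} (hn : 1 ≤ n) (a c : ℝ) (ha : 0 < a) (hc : 0 < c)
    (A : Matrix (Fin n) (Fin n) ℝ)
    (hA : A = Matrix.of fun i j : Fin n =>
      if i = j then -a
      else if (i : ℕ) = (j : ℕ) + 1 then c
      else if (i : ℕ) = 0 ∧ (j : ℕ) = n - 1 then -c
      else 0) :
    (∀ μ ∈ (A.map (Complex.ofReal)).charpoly.roots, μ.re < 0) ↔ a / c > Real.cos (π / n) := by
  obtain rfl : A = cyclicMatrix n (-a) c (-c) := hA
  rw [cyclicMatrix_map Complex.ofReal Complex.ofReal_zero, gt_iff_lt, lt_div_iff₀ hc, mul_comm]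
  obtain rfl | ⟨m, rfl⟩ : n = 1 ∨ ∃ m, n = m + 2 :=
    (Nat.le_iff_lt_or_eq.mp hn).symm.imp Eq.symm fun h => ⟨n - 2, by omega⟩
  · simpa [charpoly_cyclicMatrix_one, ha] using (by linarith : -c < a)
  · have hroots (μ : ℂ) : μ ∈ (cyclicMatrix (m + 2) ((-a : ℝ) : ℂ) c (-c : ℝ)).charpoly.roots ↔
        (μ + a) ^ (m + 2) = -(c : ℂ) ^ (m + 2) := by
      rw [charpoly_cyclicMatrix, mem_roots_X_sub_C_pow_sub_C (by omega), Complex.ofReal_neg,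
        Complex.ofReal_neg, sub_neg_eq_add, neg_mul, ← pow_succ']
    simp only [hroots]
    exact Complex.forall_add_pow_eq_neg_pow_re_neg_iff (by omega) hc a
end

section
/- Let n ≥ 1 and 0 < β < π. Then ∑_{k=0}^{n-1} 1 / (cos(β/n) - cos(π/n + 2πk/n)) = n·tan(β/2) / sin(β/n), provided cos(β/n) > cos(π/n) (i.e., β < π). -/
open Real Finset

/-- Log-derivative style identity: sum of `1/(x - ζ^k)` over `n`-th roots of unity. -/
private lemma sum_inv_sub_roots {n : ℕ} (hn : 0 < n) {ζ : ℂ} (hζ : IsPrimitiveRoot ζ n)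
    {x : ℂ} (hx : x ^ n ≠ 1) :
    ∑ k ∈ Finset.range n, 1 / (x - ζ ^ k) = n * x ^ (n - 1) / (x ^ n - 1) := by
  have hden : x ^ n - 1 ≠ 0 := sub_ne_zero.mpr hx
  have hterm : ∀ k ∈ Finset.range n, 1 / (x - ζ ^ k) =
      (∑ j ∈ Finset.range n, x ^ j * (ζ ^ k) ^ (n - 1 - j)) / (x ^ n - 1) := by
    intro k _
    have hzkn : (ζ ^ k) ^ n = 1 := by
      rw [← pow_mul, mul_comm, pow_mul, hζ.pow_eq_one, one_pow]
    have h1 : x - ζ ^ k ≠ 0 := by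
      intro h
      apply hx
      rw [sub_eq_zero] at h
      rw [h, hzkn]
    have hgs := geom_sum₂_mul x (ζ ^ k) n
    rw [hzkn] at hgs
    rw [div_eq_div_iff h1 hden, one_mul, ← hgs]
  rw [Finset.sum_congr rfl hterm, ← Finset.sum_div]
  congr 1
  calc ∑ k ∈ Finset.range n, ∑ j ∈ Finset.range n, x ^ j * (ζ ^ k) ^ (n - 1 - j)
      = ∑ j ∈ Finset.range n, x ^ j * ∑ k ∈ Finset.range n, (ζ ^ (n - 1 - j)) ^ k := by
        rw [Finset.sum_comm]
        refine Finset.sum_congr rfl fun j _ => ?_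
        rw [Finset.mul_sum]
        refine Finset.sum_congr rfl fun k _ => ?_
        rw [← pow_mul, ← pow_mul, mul_comm k (n - 1 - j)]
    _ = (n : ℂ) * x ^ (n - 1) := by
        rw [Finset.sum_eq_single (n - 1)]
        · rw [Nat.sub_self, pow_zero]
          simp [mul_comm]
        · intro j hj hjne
          rw [Finset.mem_range] at hj
          have hpos : 0 < n - 1 - j := by omega
          have hlt : n - 1 - j < n := by omega
          have hne1 : ζ ^ (n - 1 - j) ≠ 1 := hζ.pow_ne_one_of_pos_of_lt hpos.ne' hlt
          have h0 : ∑ k ∈ Finset.range n, (ζ ^ (n - 1 - j)) ^ k = 0 := by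
            rw [geom_sum_eq hne1, ← pow_mul, mul_comm, pow_mul, hζ.pow_eq_one, one_pow,
              sub_self, zero_div]
          rw [h0, mul_zero]
        · intro h
          exact absurd (Finset.mem_range.mpr (by omega)) h

/-- Sum of `1/(w ζ^k - 1)` over `n`-th roots of unity. -/
private lemma sum_inv_mul_sub_one {n : ℕ} (hn : 0 < n) {ζ : ℂ} (hζ : IsPrimitiveRoot ζ n)
    {w : ℂ} (hw : w ^ n ≠ 1) :
    ∑ k ∈ Finset.range n, 1 / (w * ζ ^ k - 1) = n / (w ^ n - 1) := by
  have hζ' : IsPrimitiveRoot ζ⁻¹ n := hζ.inv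
  have hden : w ^ n - 1 ≠ 0 := sub_ne_zero.mpr hw
  have hζ0 : ζ ≠ 0 := hζ.ne_zero hn.ne'
  have hterm : ∀ k ∈ Finset.range n, 1 / (w * ζ ^ k - 1)
      = w * (1 / (w - (ζ⁻¹) ^ k)) - 1 := by
    intro k _
    have hz0 : ζ ^ k ≠ 0 := pow_ne_zero _ hζ0
    have h1 : w * ζ ^ k - 1 ≠ 0 := by
      intro h
      apply hw
      rw [sub_eq_zero] at h
      have h2 : (w * ζ ^ k) ^ n = 1 := by rw [h, one_pow]
      rwa [mul_pow, ← pow_mul, mul_comm k n, pow_mul, hζ.pow_eq_one, one_pow, mul_one] at h2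
    have h2 : w - (ζ⁻¹) ^ k ≠ 0 := by
      intro h
      apply hw
      rw [sub_eq_zero] at h
      rw [h, ← pow_mul, mul_comm, pow_mul, hζ'.pow_eq_one, one_pow]
    have key : w - (ζ⁻¹) ^ k = (w * ζ ^ k - 1) * (ζ ^ k)⁻¹ := by
      rw [inv_pow, sub_mul, mul_assoc, mul_inv_cancel₀ hz0, mul_one, one_mul]
    rw [key]
    field_simp
    ring
  have hpow : w * w ^ (n - 1) = w ^ n := by
    rw [← pow_succ']
    congr 1
    omega
  rw [Finset.sum_congr rfl hterm, Finset.sum_sub_distrib, ← Finset.mul_sum,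
    sum_inv_sub_roots hn hζ' hw]
  simp only [Finset.sum_const, Finset.card_range, nsmul_eq_mul, mul_one]
  field_simp
  linear_combination (n : ℂ) * hpow


private lemma cot_ratio_aux (u : ℂ) (hu : u ≠ 1) :
    (u + 1) / (Complex.I * (1 - u)) = Complex.I + 2 * Complex.I * (1 / (u - 1)) := by
  have h1 : (1 : ℂ) - u ≠ 0 := sub_ne_zero.mpr (Ne.symm hu)
  have h2 : u - (1 : ℂ) ≠ 0 := sub_ne_zero.mpr hu
  have hI := Complex.I_mul_I
  field_simp
  linear_combination (u ^ 2 - 1) * hI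

private lemma sum_complex_cot {n : ℕ} (hn : 0 < n) (z : ℂ)
    (h : Complex.exp (2 * Complex.I * ((n : ℂ) * z)) ≠ 1) :
    ∑ k ∈ Finset.range n, Complex.cot (z + k * π / n) = n * Complex.cot ((n : ℂ) * z) := by
  have hn' : (n : ℂ) ≠ 0 := Nat.cast_ne_zero.mpr hn.ne'
  set ζ : ℂ := Complex.exp (2 * π * Complex.I / n) with hζdef
  have hζ : IsPrimitiveRoot ζ n := Complex.isPrimitiveRoot_exp n hn.ne'
  set w : ℂ := Complex.exp (2 * Complex.I * z) with hwdef
  have hwn : w ^ n = Complex.exp (2 * Complex.I * ((n : ℂ) * z)) := by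
    rw [hwdef, ← Complex.exp_nat_mul]
    congr 1
    ring
  have hw : w ^ n ≠ 1 := by rw [hwn]; exact h
  have hterm : ∀ k ∈ Finset.range n, Complex.cot (z + k * π / n)
      = Complex.I + 2 * Complex.I * (1 / (w * ζ ^ k - 1)) := by
    intro k _
    have he : Complex.exp (2 * Complex.I * (z + k * π / n)) = w * ζ ^ k := by
      rw [hwdef, hζdef, ← Complex.exp_nat_mul, ← Complex.exp_add]
      congr 1
      field_simp
    have hu : w * ζ ^ k ≠ 1 := by
      intro h1
      apply hw
      have h2 : (w * ζ ^ k) ^ n = 1 := by rw [h1, one_pow]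
      rwa [mul_pow, ← pow_mul, mul_comm k n, pow_mul, hζ.pow_eq_one, one_pow, mul_one] at h2
    rw [Complex.cot_eq_exp_ratio, he]
    exact cot_ratio_aux _ hu
  rw [Finset.sum_congr rfl hterm, Finset.sum_add_distrib, Finset.sum_const,
    Finset.card_range, ← Finset.mul_sum, sum_inv_mul_sub_one hn hζ hw,
    Complex.cot_eq_exp_ratio, ← hwn, cot_ratio_aux _ hw]
  simp only [nsmul_eq_mul]
  ring

private lemma sum_real_cot {n : ℕ} (hn : 0 < n) (θ : ℝ) (h : Real.sin (n * θ) ≠ 0) :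
    ∑ k ∈ Finset.range n, Real.cot (θ + k * π / n) = n * Real.cot (n * θ) := by
  have hexp : Complex.exp (2 * Complex.I * ((n : ℂ) * (θ : ℂ))) ≠ 1 := by
    intro he
    rw [Complex.exp_eq_one_iff] at he
    obtain ⟨m, hm⟩ := he
    apply h
    have h2 : (2 : ℂ) * Complex.I ≠ 0 := by simp [Complex.I_ne_zero]
    have h3 : (n : ℂ) * (θ : ℂ) = (m : ℂ) * (π : ℝ) := by
      apply mul_left_cancel₀ h2
      rw [hm]
      push_cast
      ring
    have h4 : (n : ℝ) * θ = (m : ℝ) * π := by exact_mod_cast h3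
    rw [h4]
    exact Real.sin_int_mul_pi m
  have hc := sum_complex_cot hn (θ : ℂ) hexp
  apply Complex.ofReal_injective
  push_cast [Complex.ofReal_cot]
  convert hc using 1


/-- For `n ≥ 1` and `0 < β < π`,
`∑_{k=0}^{n-1} 1/(cos(β/n) - cos(π/n + 2πk/n)) = n·tan(β/2)/sin(β/n)`. -/
theorem sum_inv_cos_sub_cos {n : ℕ} (hn : 1 ≤ n) (β : ℝ) (hβ0 : 0 < β) (hβπ : β < π) :
    ∑ k ∈ Finset.range n, 1 / (Real.cos (β / n) - Real.cos (π / n + 2 * π * k / n)) =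
      n * Real.tan (β / 2) / Real.sin (β / n) := by
  have hnpos : 0 < n := hn
  have hn0 : (0 : ℝ) < n := by exact_mod_cast hn
  have hn1 : (1 : ℝ) ≤ n := by exact_mod_cast hn
  have hπ := Real.pi_pos
  have hβn0 : 0 < β / n := div_pos hβ0 hn0
  have hβnπ : β / n < π := by
    rw [div_lt_iff₀ hn0]
    nlinarith
  have hsinβn : Real.sin (β / n) ≠ 0 := ne_of_gt (Real.sin_pos_of_pos_of_lt_pi hβn0 hβnπ)
  have hterm : ∀ k ∈ Finset.range n,
      1 / (Real.cos (β / n) - Real.cos (π / n + 2 * π * k / n)) =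
      (Real.cot ((π - β) / (2 * n) + k * π / n) - Real.cot ((π + β) / (2 * n) + k * π / n))
        / (2 * Real.sin (β / n)) := by
    intro k hk
    rw [Finset.mem_range] at hk
    have hkr : (k : ℝ) ≤ (n : ℝ) - 1 := by
      have h5 : (k : ℝ) + 1 ≤ n := by exact_mod_cast Nat.succ_le_of_lt hk
      linarith
    have hk0 : (0 : ℝ) ≤ k := Nat.cast_nonneg k
    set u : ℝ := (π + β) / (2 * n) + k * π / n with hu
    set v : ℝ := (π - β) / (2 * n) + k * π / n with hv
    have h2n : (0 : ℝ) < 2 * n := by positivity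
    have hue : u = (π + β + 2 * k * π) / (2 * n) := by
      rw [hu]; field_simp
    have hve : v = (π - β + 2 * k * π) / (2 * n) := by
      rw [hv]; field_simp
    have hu0 : 0 < u := by
      rw [hue]
      apply div_pos _ h2n
      nlinarith
    have huπ : u < π := by
      rw [hue, div_lt_iff₀ h2n]
      nlinarith [mul_le_mul_of_nonneg_left hkr Real.pi_pos.le]
    have hv0 : 0 < v := by
      rw [hve]
      apply div_pos _ h2n
      nlinarith
    have hvπ : v < π := by
      rw [hve, div_lt_iff₀ h2n]
      nlinarith [mul_le_mul_of_nonneg_left hkr Real.pi_pos.le]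
    have hsu : Real.sin u ≠ 0 := (Real.sin_pos_of_pos_of_lt_pi hu0 huπ).ne'
    have hsv : Real.sin v ≠ 0 := (Real.sin_pos_of_pos_of_lt_pi hv0 hvπ).ne'
    have hcos : Real.cos (β / n) - Real.cos (π / n + 2 * π * k / n)
        = 2 * Real.sin u * Real.sin v := by
      rw [Real.cos_sub_cos]
      have e1 : (β / n + (π / n + 2 * π * k / n)) / 2 = u := by
        rw [hu]; field_simp; ring
      have e2 : (β / n - (π / n + 2 * π * k / n)) / 2 = -v := by
        rw [hv]; field_simp; ring
      rw [e1, e2, Real.sin_neg]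
      ring
    have hsβ : Real.sin (β / n) = Real.sin u * Real.cos v - Real.cos u * Real.sin v := by
      have e3 : β / n = u - v := by rw [hu, hv]; field_simp; ring
      rw [e3, Real.sin_sub]
    have hcot : Real.cot v - Real.cot u = Real.sin (β / n) / (Real.sin u * Real.sin v) := by
      rw [Real.cot_eq_cos_div_sin, Real.cot_eq_cos_div_sin, hsβ]
      field_simp
    rw [hcos, hcot, hsβ]
    have hne : Real.sin u * Real.cos v - Real.cos u * Real.sin v ≠ 0 := by
      rw [← hsβ]; exact hsinβn
    field_simp
    rw [div_self (by rwa [mul_comm (Real.cos u)] at hne)]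
  rw [Finset.sum_congr rfl hterm, ← Finset.sum_div, Finset.sum_sub_distrib]
  have ev : (n : ℝ) * ((π - β) / (2 * n)) = (π - β) / 2 := by field_simp
  have eu : (n : ℝ) * ((π + β) / (2 * n)) = (π + β) / 2 := by field_simp
  have hcosβ2 : 0 < Real.cos (β / 2) :=
    Real.cos_pos_of_mem_Ioo ⟨by linarith, by linarith⟩
  have hsv' : Real.sin ((n : ℝ) * ((π - β) / (2 * n))) ≠ 0 := by
    rw [ev, show (π - β) / 2 = π / 2 - β / 2 by ring, Real.sin_pi_div_two_sub]
    exact hcosβ2.ne'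
  have hsu' : Real.sin ((n : ℝ) * ((π + β) / (2 * n))) ≠ 0 := by
    rw [eu, show (π + β) / 2 = π / 2 - -(β / 2) by ring, Real.sin_pi_div_two_sub, Real.cos_neg]
    exact hcosβ2.ne'
  rw [sum_real_cot hnpos _ hsv', sum_real_cot hnpos _ hsu', ev, eu]
  have hcotv : Real.cot ((π - β) / 2) = Real.tan (β / 2) := by
    rw [show (π - β) / 2 = π / 2 - β / 2 by ring, Real.cot_eq_cos_div_sin,
      Real.cos_pi_div_two_sub, Real.sin_pi_div_two_sub, Real.tan_eq_sin_div_cos]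
  have hcotu : Real.cot ((π + β) / 2) = -Real.tan (β / 2) := by
    rw [show (π + β) / 2 = π / 2 - -(β / 2) by ring, Real.cot_eq_cos_div_sin,
      Real.cos_pi_div_two_sub, Real.sin_pi_div_two_sub, Real.sin_neg, Real.cos_neg,
      Real.tan_eq_sin_div_cos, neg_div]
  rw [hcotv, hcotu]
  field_simp
  ring
end

section
/- Let n ≥ 1 and β > 0. Then ∑_{k=0}^{n-1} 1 / (cosh(β/n) - cos((2k+1)π/n)) = n·tanh(β/2) / sinh(β/n). -/
/-!
With `z = e^t` and `w = e^{iθ}` on the unit circle, `sinh t / (cosh t - cos θ)` is the real part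
of `(z + w) / (z - w)`. The points `w_k = e^{i(2k+1)π/n}` are the roots of `X^n + 1`, so the
logarithmic derivative of `X^n + 1` gives `∑ (z + w_k) / (z - w_k) = n (z^n - 1) / (z^n + 1)`,
whose real part at `z^n = e^{nt}` is `n tanh (nt/2)`. Take `t = β / n`.
-/

open Real Polynomial Finset

theorem IsPrimitiveRoot.sum_one_div_sub_mul {K : Type*} [Field K] {n : ℕ} {ζ α a z : K}
    (hζ : IsPrimitiveRoot ζ n) (hα : α ^ n = a) (hz : z ^ n ≠ a) :
    ∑ i ∈ range n, 1 / (z - ζ ^ i * α) = n * z ^ (n - 1) / (z ^ n - a) := by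
  have heval : (X ^ n - C a).eval z ≠ 0 := by simpa [sub_eq_zero] using hz
  have h := (X_pow_sub_C_splits_of_isPrimitiveRoot hζ hα).eval_derivative_div_eval_of_ne_zero heval
  rw [← nthRoots, hζ.nthRoots_eq hα, Multiset.map_map] at h
  simpa [Finset.sum, derivative_X_pow] using h.symm

theorem IsPrimitiveRoot.sum_add_div_sub_mul {K : Type*} [Field K] {n : ℕ} {ζ α a z : K}
    (hζ : IsPrimitiveRoot ζ n) (hα : α ^ n = a) (hz : z ^ n ≠ a) :
    ∑ i ∈ range n, (z + ζ ^ i * α) / (z - ζ ^ i * α) = n * (z ^ n + a) / (z ^ n - a) := by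
  have hne : ∀ i, z - ζ ^ i * α ≠ 0 := fun i h ↦ hz <| by
    rw [sub_eq_zero.mp h, mul_pow, ← pow_mul, mul_comm i, pow_mul, hζ.pow_eq_one, one_pow,
      one_mul, hα]
  have hterm : ∀ i, (z + ζ ^ i * α) / (z - ζ ^ i * α) = 2 * z * (1 / (z - ζ ^ i * α)) - 1 := by
    intro i
    field_simp [hne i]
    ring
  simp only [hterm, sum_sub_distrib, ← mul_sum, hζ.sum_one_div_sub_mul hα hz, sum_const,
    card_range, nsmul_eq_mul, mul_one]
  have hsub : z ^ n - a ≠ 0 := sub_ne_zero.mpr hz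
  rcases n with _ | m
  · simp
  · rw [Nat.add_sub_cancel, pow_succ'] at *
    field_simp
    ring

theorem Complex.re_exp_add_exp_div_exp_sub_exp (x θ : ℝ) :
    (((Real.exp x : ℂ) + exp (θ * I)) / ((Real.exp x : ℂ) - exp (θ * I))).re =
      Real.sinh x / (Real.cosh x - Real.cos θ) := by
  have hnum : Real.exp x ^ 2 - 1 = 2 * Real.exp x * Real.sinh x := by
    rw [Real.sinh_eq, Real.exp_neg]
    field_simp
  have hden : Real.exp x ^ 2 + 1 - 2 * Real.exp x * Real.cos θ =
      2 * Real.exp x * (Real.cosh x - Real.cos θ) := by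
    rw [Real.cosh_eq, Real.exp_neg]
    field_simp
  rw [div_re, normSq_apply, ← add_div]
  simp only [add_re, sub_re, add_im, sub_im, ofReal_re, ofReal_im, exp_ofReal_mul_I_re,
    exp_ofReal_mul_I_im]
  calc _ = (Real.exp x ^ 2 - 1) / (Real.exp x ^ 2 + 1 - 2 * Real.exp x * Real.cos θ) := by
        congr 1
        · linear_combination (-1 : ℝ) * Real.sin_sq_add_cos_sq θ
        · linear_combination Real.sin_sq_add_cos_sq θ
    _ = _ := by rw [hnum, hden, mul_div_mul_left _ _ (by positivity)]

theorem Complex.exp_odd_mul_pi_div_mul_I (n k : ℕ) :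
    exp (((2 * k + 1) * π / n : ℝ) * I) = exp (2 * π * I / n) ^ k * exp (π * I / n) := by
  rw [← exp_nat_mul, ← exp_add]
  push_cast
  ring_nf

theorem Complex.exp_pi_mul_I_div_pow {n : ℕ} (hn : n ≠ 0) : exp (π * I / n) ^ n = -1 := by
  rw [← exp_nat_mul, mul_div_cancel₀ _ (Nat.cast_ne_zero.mpr hn), exp_pi_mul_I]

theorem Real.tanh_half_eq_exp_sub_one_div_exp_add_one (x : ℝ) :
    tanh (x / 2) = (exp x - 1) / (exp x + 1) := by
  have h : exp x = exp (x / 2) ^ 2 := by rw [← exp_nat_mul]; ring_nf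
  rw [tanh_eq, h, exp_neg]
  field_simp

theorem sum_sinh_div_cosh_sub_cos {n : ℕ} (hn : n ≠ 0) (t : ℝ) :
    ∑ k ∈ range n, sinh t / (cosh t - cos ((2 * k + 1) * π / n)) = n * tanh (n * t / 2) := by
  have hzn : (Real.exp t : ℂ) ^ n = (Real.exp (n * t) : ℂ) := by
    rw [← Complex.ofReal_pow, ← Real.exp_nat_mul]
  have hsum := (Complex.isPrimitiveRoot_exp n hn).sum_add_div_sub_mul
    (Complex.exp_pi_mul_I_div_pow hn) (z := (Real.exp t : ℂ))
    (by rw [hzn]; exact_mod_cast (neg_one_lt_zero.trans (Real.exp_pos _)).ne')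
  simp only [← Complex.exp_odd_mul_pi_div_mul_I, hzn, ← sub_eq_add_neg, sub_neg_eq_add] at hsum
  have hre := congrArg Complex.re hsum
  simp only [Complex.re_sum, Complex.re_exp_add_exp_div_exp_sub_exp] at hre
  rw [hre, tanh_half_eq_exp_sub_one_div_exp_add_one, ← mul_div_assoc]
  norm_cast

/-- For `n ≥ 1` and `β > 0`,
`∑_{k=0}^{n-1} 1/(cosh(β/n) - cos((2k+1)π/n)) = n·tanh(β/2)/sinh(β/n)`. -/
theorem sum_inv_cosh_sub_cos {n : ℕ} (hn : 1 ≤ n) (β : ℝ) (hβ : 0 < β) :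
    ∑ k ∈ Finset.range n, 1 / (Real.cosh (β / n) - Real.cos ((2 * k + 1) * π / n)) =
      n * Real.tanh (β / 2) / Real.sinh (β / n) := by
  have hn0 : n ≠ 0 := Nat.one_le_iff_ne_zero.mp hn
  have hsinh : sinh (β / n) ≠ 0 := (sinh_pos_iff.mpr (by positivity)).ne'
  have hβn : n * (β / n) = β := mul_div_cancel₀ β (Nat.cast_ne_zero.mpr hn0)
  rw [eq_div_iff hsinh, sum_mul]
  simp only [one_div_mul_eq_div]
  rw [sum_sinh_div_cosh_sub_cos hn0, hβn]
end

section
/- Let n ≥ 1. Then ∑_{k=0}^{n-1} 1 / (1 - cos((2k+1)π/n)) = n²/2. -/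
open Real Finset

/-! With `z = e^{iθ}` and `z ^ n = -1` one has `(1 - z) ∑_{j<n} z^j = 2` and `1 - cos θ = -(1 - z)² / (2z)`,
so `1 / (1 - cos θ) = -z (∑_{j<n} z^j)² / 2 = -(∑_{j,l<n} z^{j+l+1}) / 2`. The numbers `e^{i(2k+1)π/n}` are the
odd powers `ζ^{2k+1}` of a primitive `2n`-th root of unity, and summing `ζ^{(2k+1)m}` over `k` kills every
exponent `0 < m < 2n` except `m = n`, where each term is `-1`; exactly `n` pairs `(j, l)` have `j + l + 1 = n`. -/

section

variable {R : Type*}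

theorem mul_geom_sum_sq_eq_sum_sum [CommSemiring R] (z : R) (n : ℕ) :
    z * (∑ j ∈ range n, z ^ j) ^ 2 = ∑ j ∈ range n, ∑ l ∈ range n, z ^ (j + l + 1) := by
  rw [sq, sum_mul_sum, mul_sum]
  exact sum_congr rfl fun j _ => by rw [mul_sum]; exact sum_congr rfl fun l _ => by ring

theorem inv_one_sub_half_add_inv_of_pow_eq_neg_one [Field R] [NeZero (2 : R)] {z : R} {n : ℕ}
    (hz : z ^ n = -1) :
    (1 - (z + z⁻¹) / 2)⁻¹ = -(z * (∑ j ∈ range n, z ^ j) ^ 2) / 2 := by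
  have hne : (1 : R) ≠ -1 := fun h => two_ne_zero (α := R) (by linear_combination h)
  have hz0 : z ≠ 0 := by
    rintro rfl
    rcases n with _ | n
    · exact hne (by simpa using hz)
    · simp at hz
  have hz1 : 1 - z ≠ 0 := by
    rintro h
    rw [← sub_eq_zero.mp h, one_pow] at hz
    exact hne hz
  have hS : ∑ j ∈ range n, z ^ j = 2 / (1 - z) := by
    rw [eq_div_iff hz1, geom_sum_mul_neg, hz]; ring
  have hden : 1 - (z + z⁻¹) / 2 = -(1 - z) ^ 2 / (2 * z) := by
    field_simp; ring
  rw [hS, hden]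
  field_simp

theorem IsPrimitiveRoot.pow_eq_neg_one [CommRing R] [IsDomain R] {ζ : R} {n : ℕ}
    (hζ : IsPrimitiveRoot ζ (2 * n)) (hn : n ≠ 0) : ζ ^ n = -1 := by
  have h2 := hζ.pow_of_dvd hn (dvd_mul_left n 2)
  rw [Nat.mul_div_cancel _ (Nat.pos_of_ne_zero hn)] at h2
  exact h2.eq_neg_one_of_two_right

theorem IsPrimitiveRoot.sum_range_pow_odd_mul [CommRing R] [IsDomain R] {ζ : R} {n m : ℕ}
    (hζ : IsPrimitiveRoot ζ (2 * n)) (hm0 : 0 < m) (hm : m < 2 * n) :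
    ∑ k ∈ range n, ζ ^ ((2 * k + 1) * m) = if m = n then -(n : R) else 0 := by
  split_ifs with hmn
  · subst hmn
    simp [mul_comm _ m, pow_mul, hζ.pow_eq_neg_one hm0.ne', Odd.neg_one_pow (odd_two_mul_add_one _)]
  · have hne : ζ ^ (2 * m) ≠ 1 := by
      rw [Ne, hζ.pow_eq_one_iff_dvd, Nat.mul_dvd_mul_iff_left two_pos]
      exact fun h => hmn (Nat.eq_of_dvd_of_lt_two_mul hm0.ne' h hm)
    have hgeom : ∑ k ∈ range n, (ζ ^ (2 * m)) ^ k = 0 := by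
      have hpow : (ζ ^ (2 * m)) ^ n = 1 := by
        rw [← pow_mul, mul_right_comm, pow_mul, hζ.pow_eq_one, one_pow]
      have h := geom_sum_mul (ζ ^ (2 * m)) n
      rw [hpow, sub_self] at h
      exact (mul_eq_zero.mp h).resolve_right (sub_ne_zero.mpr hne)
    calc ∑ k ∈ range n, ζ ^ ((2 * k + 1) * m)
        = ζ ^ m * ∑ k ∈ range n, (ζ ^ (2 * m)) ^ k := by
          rw [mul_sum]; exact sum_congr rfl fun k _ => by ring
      _ = 0 := by rw [hgeom, mul_zero]

theorem sum_range_sum_range_ite_add_add_one_eq_nsmul [AddCommMonoid R] (n : ℕ) (c : R) :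
    ∑ j ∈ range n, ∑ l ∈ range n, (if j + l + 1 = n then c else 0) = n • c := by
  have hrow : ∀ j ∈ range n, ∑ l ∈ range n, (if j + l + 1 = n then c else 0) = c := by
    intro j hj
    have hj := mem_range.mp hj
    rw [sum_congr rfl fun l _ => if_congr (show j + l + 1 = n ↔ n - 1 - j = l by omega) rfl rfl,
      sum_ite_eq, if_pos (mem_range.mpr (by omega))]
  rw [sum_congr rfl hrow, sum_const, card_range]

end

theorem Complex.ofReal_one_div_one_sub_cos_of_pow_eq_neg_one {θ : ℝ} {n : ℕ}
    (h : Complex.exp (θ * Complex.I) ^ n = -1) :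
    ((1 / (1 - Real.cos θ) : ℝ) : ℂ) =
      -(∑ j ∈ range n, ∑ l ∈ range n, Complex.exp (θ * Complex.I) ^ (j + l + 1)) / 2 := by
  push_cast
  rw [Complex.cos, neg_mul, Complex.exp_neg, one_div,
    inv_one_sub_half_add_inv_of_pow_eq_neg_one h, mul_geom_sum_sq_eq_sum_sum]

/-- For `n ≥ 1`, `∑_{k=0}^{n-1} 1/(1 - cos((2k+1)π/n)) = n²/2`. -/
theorem sum_inv_one_sub_cos {n : ℕ} (hn : 1 ≤ n) :
    ∑ k ∈ Finset.range n, 1 / (1 - Real.cos ((2 * k + 1) * π / n)) = (n : ℝ) ^ 2 / 2 := by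
  set ζ : ℂ := Complex.exp (2 * π * Complex.I / ↑(2 * n))
  have hζ : IsPrimitiveRoot ζ (2 * n) := Complex.isPrimitiveRoot_exp _ (by omega)
  have hterm (k : ℕ) : ((1 / (1 - Real.cos ((2 * k + 1) * π / n)) : ℝ) : ℂ) =
      -(∑ j ∈ range n, ∑ l ∈ range n, ζ ^ ((2 * k + 1) * (j + l + 1))) / 2 := by
    have hexp : Complex.exp (((2 * k + 1) * π / n : ℝ) * Complex.I) = ζ ^ (2 * k + 1) := by
      rw [← Complex.exp_nat_mul]
      congr 1
      push_cast
      field_simp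
    have hpow : (ζ ^ (2 * k + 1)) ^ n = -1 := by
      rw [← pow_mul, mul_comm, pow_mul, hζ.pow_eq_neg_one (by omega),
        Odd.neg_one_pow (odd_two_mul_add_one k)]
    rw [Complex.ofReal_one_div_one_sub_cos_of_pow_eq_neg_one (hexp ▸ hpow), hexp]
    simp only [← pow_mul]
  apply Complex.ofReal_injective
  calc ((∑ k ∈ range n, 1 / (1 - Real.cos ((2 * k + 1) * π / n)) : ℝ) : ℂ)
      = -(∑ j ∈ range n, ∑ l ∈ range n, ∑ k ∈ range n, ζ ^ ((2 * k + 1) * (j + l + 1))) / 2 := by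
        rw [Complex.ofReal_sum, sum_congr rfl fun k _ => hterm k, ← sum_div, sum_neg_distrib,
          sum_comm, sum_congr rfl fun j _ => sum_comm]
    _ = -(∑ j ∈ range n, ∑ l ∈ range n, if j + l + 1 = n then -(n : ℂ) else 0) / 2 := by
        refine congrArg (-· / 2) (sum_congr rfl fun j hj => sum_congr rfl fun l hl => ?_)
        rw [mem_range] at hj hl
        exact hζ.sum_range_pow_odd_mul (by omega) (by omega)
    _ = ((n ^ 2 / 2 : ℝ) : ℂ) := by
        rw [sum_range_sum_range_ite_add_add_one_eq_nsmul]
        push_cast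
        ring
end

section
/- Let A be an n×n real Hurwitz matrix and P the unique solution of PA + AᵀP + I = 0 (Q = I). Then trace(P) = -∑_{i=1}^n 1/(2·Re(λ_i(A))) if and only if A is normal (AᵀA = AAᵀ). -/
/-!
Replacing `P` by its symmetric part changes neither the trace nor the equation. A Schur
triangulation `A = U T U*` turns the equation into `S T + T* S + 1 = 0` with `S = U* P U`
Hermitian and `T` upper triangular, its diagonal being the eigenvalues `λₖ` of `A`.

Bordering by the last row and column, `T = [T₁ c; 0 λ]` and `S = [S₁ s; s* σ]`, the equation
splits into the one for `(S₁, T₁)`, `S₁ c + λ s + T₁* s = 0`, and `2 Re (s* c) + 2 σ Re λ + 1 = 0`.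
By induction `S₁ ≻ 0`, so `s = S₁ w` for some `w`, and the middle equation together with the one
for `S₁` gives `Re (s* c) = -Re λ · w* S₁ w + |w|² / 2 ≥ 0`. Hence the Schur complement
`σ - w* S₁ w = (1 + |w|²) / (-2 Re λ)` is positive, so `S ≻ 0`, and `σ ≥ -1 / (2 Re λ)` with
equality iff `w = 0`, i.e. iff `c = 0`. Summing over the diagonal, the trace bound is attained iff
`T` is diagonal, and an upper triangular matrix is diagonal iff it is normal.
-/

open Matrix ComplexOrder

theorem Module.End.exists_orthonormal_inner_apply_eq_zero_of_lt
    {E : Type*} [NormedAddCommGroup E] [InnerProductSpace ℂ E] {n : ℕ}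
    (hE : Module.finrank ℂ E = n) (f : Module.End ℂ E) :
    ∃ b : Fin n → E, Orthonormal ℂ b ∧ ∀ i j, j < i → inner ℂ (b i) (f (b j)) = 0 := by
  classical
  induction n generalizing E with
  | zero => exact ⟨Fin.elim0, orthonormal_iff_ite.mpr fun i => i.elim0, fun i => i.elim0⟩
  | succ n ih =>
    have : FiniteDimensional ℂ E := .of_finrank_eq_succ hE
    have : Nontrivial E := (Module.finrank_pos_iff (R := ℂ)).mp (by omega)
    have : Fact (Module.finrank ℂ E = n + 1) := ⟨hE⟩
    obtain ⟨μ, hμ⟩ := f.exists_eigenvalue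
    obtain ⟨v, hv⟩ := hμ.exists_hasEigenvector
    obtain ⟨u, hu1, hu⟩ : ∃ u, ‖u‖ = 1 ∧ f u = μ • u :=
      ⟨_, norm_smul_inv_norm hv.2, by rw [map_smul, hv.apply_eq_smul, smul_comm]⟩
    set K := (ℂ ∙ u)ᗮ
    obtain ⟨b, hb, htri⟩ := ih (Submodule.finrank_orthogonal_span_singleton (v := u)
      (norm_ne_zero_iff.mp (by simp [hu1])))
      (K.orthogonalProjectionOnto.toLinearMap ∘ₗ f ∘ₗ K.subtype)
    have hub : ∀ i, inner ℂ u (b i : E) = 0 := fun i =>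
      Submodule.mem_orthogonal_singleton_iff_inner_right.mp (b i).2
    refine ⟨Fin.cons u (fun i => (b i : E)), orthonormal_iff_ite.mpr fun i j => ?_,
      fun i j hji => ?_⟩
    · rw [orthonormal_iff_ite] at hb
      simp only [Submodule.coe_inner] at hb
      cases i using Fin.cases <;> cases j using Fin.cases <;>
        simp [hub, inner_eq_zero_symm.mp (hub _), hu1, hb, (Fin.succ_ne_zero _).symm,
          inner_self_eq_norm_sq_to_K]
    · cases i using Fin.cases with
      | zero => exact absurd hji (Fin.not_lt_zero j)
      | succ i =>
        cases j using Fin.cases with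
        | zero => simp [hu, inner_eq_zero_symm.mp (hub i)]
        | succ j =>
          have := htri i j (Fin.succ_lt_succ_iff.mp hji)
          rwa [LinearMap.comp_apply, LinearMap.comp_apply, ContinuousLinearMap.coe_coe,
            Submodule.inner_orthogonalProjectionOnto_eq_of_mem_left] at this

theorem Matrix.star_mul_mul_apply_eq_dotProduct {R ι : Type*} [CommSemiring R] [StarRing R]
    [Fintype ι] (v : ι → ι → R) (M : Matrix ι ι R) (i j : ι) :
    (star (of fun k l => v l k) * M * of fun k l => v l k) i j = star (v i) ⬝ᵥ M *ᵥ v j := by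
  simp only [mul_apply, dotProduct, mulVec, Finset.mul_sum, Finset.sum_mul, star_apply,
    of_apply, Pi.star_apply]
  rw [Finset.sum_comm]
  simp only [mul_assoc]

theorem Matrix.exists_mem_unitaryGroup_isUpperTriangular {n : ℕ}
    (B : Matrix (Fin n) (Fin n) ℂ) :
    ∃ U ∈ unitaryGroup (Fin n) ℂ, (star U * B * U).IsUpperTriangular := by
  obtain ⟨b, hb, htri⟩ := Module.End.exists_orthonormal_inner_apply_eq_zero_of_lt
    (finrank_euclideanSpace_fin (𝕜 := ℂ)) (toLpLin 2 2 B)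
  refine ⟨of fun k l => b l k, mem_unitaryGroup_iff'.mpr ?_, fun i j hji => ?_⟩
  · ext i j
    rw [← Matrix.mul_one (star _), star_mul_mul_apply_eq_dotProduct, one_mulVec,
      dotProduct_comm, ← EuclideanSpace.inner_eq_star_dotProduct]
    exact orthonormal_iff_ite.mp hb i j
  · rw [star_mul_mul_apply_eq_dotProduct, dotProduct_comm]
    simpa [EuclideanSpace.inner_eq_star_dotProduct] using htri i j hji

section StarAlgEquiv

variable {S R : Type*} [CommSemiring S] [Semiring R] [StarRing R] [Algebra S R]

theorem StarAlgEquiv.map_lyapunov (φ : R ≃⋆ₐ[S] R) {p b : R}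
    (h : p * b + star b * p + 1 = 0) : φ p * φ b + star (φ b) * φ p + 1 = 0 := by
  simpa only [map_add, map_mul, map_star, map_one, map_zero] using congrArg φ h

theorem StarAlgEquiv.isStarNormal_iff (φ : R ≃⋆ₐ[S] R) {b : R} :
    IsStarNormal (φ b) ↔ IsStarNormal b :=
  ⟨fun h => by simpa using h.map φ.symm, fun h => h.map φ⟩

end StarAlgEquiv

section UnitaryConj

variable {m R : Type*} [Fintype m] [DecidableEq m] [CommRing R] [StarRing R]
  (u : unitary (Matrix m m R)) (M : Matrix m m R)

theorem Matrix.charpoly_conjStarAlgAut :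
    (Unitary.conjStarAlgAut R _ u M).charpoly = M.charpoly := by
  rw [Unitary.conjStarAlgAut_apply, charpoly_mul_comm, ← Matrix.mul_assoc,
    Unitary.coe_star_mul_self, Matrix.one_mul]

theorem Matrix.trace_conjStarAlgAut : (Unitary.conjStarAlgAut R _ u M).trace = M.trace := by
  rw [Unitary.conjStarAlgAut_apply, trace_mul_comm, ← Matrix.mul_assoc,
    Unitary.coe_star_mul_self, Matrix.one_mul]

end UnitaryConj

section OfReal

variable {m : Type*}

theorem Matrix.transpose_map_ofReal (A : Matrix m m ℝ) :
    Aᵀ.map Complex.ofReal = (A.map Complex.ofReal)ᴴ := by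
  rw [← conjTranspose_eq_transpose_of_trivial, conjTranspose_map]
  exact fun x => (Complex.conj_ofReal x).symm

theorem Matrix.IsSymm.isHermitian_map_ofReal {Q : Matrix m m ℝ} (hQ : Q.IsSymm) :
    (Q.map Complex.ofReal).IsHermitian := by
  rw [IsHermitian, ← transpose_map_ofReal, hQ.eq]

variable [Fintype m]

theorem Matrix.map_ofReal_mul (M N : Matrix m m ℝ) :
    (M * N).map Complex.ofReal = M.map Complex.ofReal * N.map Complex.ofReal :=
  Matrix.map_mul (f := Complex.ofRealHom)

theorem Matrix.isStarNormal_map_ofReal_iff {A : Matrix m m ℝ} :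
    IsStarNormal (A.map Complex.ofReal) ↔ Aᵀ * A = A * Aᵀ := by
  rw [isStarNormal_iff, commute_iff_eq, star_eq_conjTranspose, ← transpose_map_ofReal,
    ← map_ofReal_mul, ← map_ofReal_mul]
  exact (map_injective Complex.ofReal_injective).eq_iff

theorem Matrix.lyapunov_map_ofReal [DecidableEq m] {A Q : Matrix m m ℝ}
    (h : Q * A + Aᵀ * Q + 1 = 0) :
    Q.map Complex.ofReal * A.map Complex.ofReal + (A.map Complex.ofReal)ᴴ * Q.map Complex.ofReal
      + 1 = 0 := by
  have := congrArg Complex.ofRealHom.mapMatrix h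
  rw [map_add, map_add, map_mul, map_mul, map_one, map_zero] at this
  rw [← transpose_map_ofReal]
  exact this

end OfReal

theorem exists_isSymm_lyapunov {m K : Type*} [Fintype m] [DecidableEq m] [Field K] [CharZero K]
    {A P : Matrix m m K} (hP : P * A + Aᵀ * P + 1 = 0) :
    ∃ Q : Matrix m m K, Q.IsSymm ∧ Q * A + Aᵀ * Q + 1 = 0 ∧ Q.trace = P.trace := by
  have hPt : Pᵀ * A + Aᵀ * Pᵀ + 1 = 0 := by
    simpa [transpose_add, transpose_mul, add_comm] using congrArg transpose hP
  refine ⟨(2⁻¹ : K) • (P + Pᵀ), ?_, ?_, ?_⟩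
  · simp [IsSymm, transpose_add, add_comm]
  · calc (2⁻¹ : K) • (P + Pᵀ) * A + Aᵀ * ((2⁻¹ : K) • (P + Pᵀ)) + 1
        = (2⁻¹ : K) • ((P * A + Aᵀ * P + 1) + (Pᵀ * A + Aᵀ * Pᵀ + 1)) := by
          simp only [smul_mul_assoc, mul_smul_comm, add_mul, mul_add, smul_add]
          module
      _ = 0 := by rw [hP, hPt, add_zero, smul_zero]
  · rw [trace_smul, trace_add, trace_transpose, smul_eq_mul]
    ring

theorem Matrix.IsUpperTriangular.charpoly_roots {ι R : Type*} [Fintype ι] [DecidableEq ι]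
    [LinearOrder ι] [CommRing R] [IsDomain R] {T : Matrix ι ι R} (hT : T.IsUpperTriangular) :
    T.charpoly.roots = Finset.univ.val.map fun i => T i i := by
  rw [charpoly_of_isUpperTriangular T hT, Finset.prod_eq_multiset_prod]
  convert Polynomial.roots_multiset_prod_X_sub_C (Finset.univ.val.map fun i => T i i) using 3
  rw [Multiset.map_map]
  rfl

theorem Matrix.IsDiag.isStarNormal {m R : Type*} [Fintype m] [DecidableEq m] [CommSemiring R]
    [StarRing R] {T : Matrix m m R} (hT : T.IsDiag) : IsStarNormal T := by
  rw [isStarNormal_iff, commute_iff_eq, ← hT.diagonal_diag, star_eq_conjTranspose,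
    diagonal_conjTranspose, diagonal_mul_diagonal, diagonal_mul_diagonal]
  exact congrArg diagonal (funext fun i => mul_comm _ _)

theorem Matrix.IsUpperTriangular.isDiag_of_isStarNormal {ι : Type*} [Fintype ι] [LinearOrder ι]
    {T : Matrix ι ι ℂ} (hT : T.IsUpperTriangular) (hN : IsStarNormal T) : T.IsDiag := by
  suffices h : ∀ i j, i < j → T i j = 0 from fun i j hij => hij.lt_or_gt.elim (h i j) (hT ·)
  intro i
  induction i using WellFoundedLT.induction with
  | ind i ih =>
    have hcol : ∀ k ≠ i, T k i = 0 := fun k hk => hk.lt_or_gt.elim (fun h => ih k h i h) (hT ·)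
    have hii := congrFun (congrFun hN.star_comm_self.eq i) i
    simp only [mul_apply, star_apply] at hii
    rw [Finset.sum_eq_single i (fun k _ hk => by rw [hcol k hk, star_zero, zero_mul])
      (by simp)] at hii
    have hrow : ∑ k, Complex.normSq (T i k) = Complex.normSq (T i i) := by
      apply Complex.ofReal_injective
      push_cast
      simp only [← Complex.mul_conj, Complex.star_def] at hii ⊢
      rw [← hii, mul_comm]
    rw [← Finset.add_sum_erase _ _ (Finset.mem_univ i), add_eq_left,
      Finset.sum_eq_zero_iff_of_nonneg (fun _ _ => Complex.normSq_nonneg _)] at hrow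
    exact fun j hij => Complex.normSq_eq_zero.mp (hrow j (by simp [hij.ne']))

theorem Matrix.star_star_dotProduct_mulVec {m n R : Type*} [Fintype m] [Fintype n]
    [CommSemiring R] [StarRing R] (M : Matrix m n R) (x : m → R) (y : n → R) :
    star (star x ⬝ᵥ M *ᵥ y) = star y ⬝ᵥ Mᴴ *ᵥ x := by
  rw [star_dotProduct, star_star, star_mulVec, ← dotProduct_mulVec]

section Lyapunov

variable {m : Type*} [Fintype m] [DecidableEq m] {S T : Matrix m m ℂ}

theorem Matrix.IsDiag.re_apply_of_lyapunov (hT : T.IsDiag) (hL : S * T + Tᴴ * S + 1 = 0)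
    {k : m} (hk : (T k k).re ≠ 0) : (S k k).re = -1 / (2 * (T k k).re) := by
  rw [← hT.diagonal_diag, diagonal_conjTranspose] at hL
  have := congrArg Complex.re (congrFun (congrFun hL k) k)
  simp only [Matrix.add_apply, mul_diagonal, diagonal_mul, one_apply_eq, Matrix.zero_apply,
    Complex.add_re, Complex.mul_re, Pi.star_apply, diag_apply, Complex.star_def, Complex.conj_re,
    Complex.conj_im, Complex.one_re, Complex.zero_re] at this
  field_simp
  linarith

theorem lyapunov_re_star_dotProduct_mulVec (hS : S.IsHermitian) (hL : S * T + Tᴴ * S + 1 = 0)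
    (w : m → ℂ) : (star w ⬝ᵥ (Tᴴ * S) *ᵥ w).re = -(star w ⬝ᵥ w).re / 2 := by
  have hsum : star w ⬝ᵥ (Tᴴ * S) *ᵥ w + star (star w ⬝ᵥ (Tᴴ * S) *ᵥ w) = -(star w ⬝ᵥ w) := by
    rw [star_star_dotProduct_mulVec, conjTranspose_mul, conjTranspose_conjTranspose, hS.eq,
      ← dotProduct_add, ← add_mulVec, add_comm, eq_neg_of_add_eq_zero_left hL, neg_mulVec,
      one_mulVec, dotProduct_neg]
  have := congrArg Complex.re hsum
  simp only [Complex.add_re, Complex.star_def, Complex.conj_re, Complex.neg_re] at this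
  linarith

theorem lyapunov_re_star_dotProduct_border (hS : S.IsHermitian) (hL : S * T + Tᴴ * S + 1 = 0)
    {c s w : m → ℂ} {μ : ℂ} (hw : S *ᵥ w = s) (hv : S *ᵥ c + μ • s + Tᴴ *ᵥ s = 0) :
    (star s ⬝ᵥ c).re = -μ.re * (star w ⬝ᵥ s).re + (star w ⬝ᵥ w).re / 2 := by
  have hc : S *ᵥ c = -(μ • s) - (Tᴴ * S) *ᵥ w := by
    rw [← mulVec_mulVec, hw]
    linear_combination hv
  have hs : star s ⬝ᵥ c = -μ * (star w ⬝ᵥ s) - star w ⬝ᵥ (Tᴴ * S) *ᵥ w := by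
    rw [← hw, star_mulVec, ← dotProduct_mulVec, hS.eq, hc, hw, dotProduct_sub, dotProduct_neg,
      dotProduct_smul, smul_eq_mul, neg_mul]
  have him : (star w ⬝ᵥ s).im = 0 := by
    rw [← hw]
    exact hS.im_star_dotProduct_mulVec_self w
  rw [hs, Complex.sub_re, Complex.mul_re, him, lyapunov_re_star_dotProduct_mulVec hS hL]
  simp only [Complex.neg_re, Complex.neg_im]
  ring

end Lyapunov

namespace Matrix

variable {R : Type*} {n : ℕ}

abbrev leadingBlock (M : Matrix (Fin (n + 1)) (Fin (n + 1)) R) : Matrix (Fin n) (Fin n) R :=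
  M.submatrix Fin.castSucc Fin.castSucc

abbrev borderColumn (M : Matrix (Fin (n + 1)) (Fin (n + 1)) R) : Fin n → R :=
  fun i => M i.castSucc (Fin.last n)

theorem IsUpperTriangular.leadingBlock [Zero R] {T : Matrix (Fin (n + 1)) (Fin (n + 1)) R}
    (hT : T.IsUpperTriangular) : T.leadingBlock.IsUpperTriangular :=
  fun _ _ h => hT (Fin.castSucc_lt_castSucc_iff.mpr h)

theorem IsUpperTriangular.apply_last_castSucc [Zero R]
    {T : Matrix (Fin (n + 1)) (Fin (n + 1)) R} (hT : T.IsUpperTriangular) (j : Fin n) :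
    T (Fin.last n) j.castSucc = 0 :=
  hT (Fin.castSucc_lt_last j)

theorem star_dotProduct_mulVec_castSucc [CommSemiring R] [StarRing R]
    (S : Matrix (Fin (n + 1)) (Fin (n + 1)) R) (x : Fin (n + 1) → R) :
    star x ⬝ᵥ S *ᵥ x = star (x ∘ Fin.castSucc) ⬝ᵥ S.leadingBlock *ᵥ (x ∘ Fin.castSucc)
      + star (x ∘ Fin.castSucc) ⬝ᵥ S.borderColumn * x (Fin.last n)
      + star (x (Fin.last n)) * ((fun j => S (Fin.last n) j.castSucc) ⬝ᵥ x ∘ Fin.castSucc)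
      + star (x (Fin.last n)) * S (Fin.last n) (Fin.last n) * x (Fin.last n) := by
  simp only [dotProduct, mulVec, Fin.sum_univ_castSucc, Finset.mul_sum, Finset.sum_mul, mul_add,
    Finset.sum_add_distrib, Pi.star_apply, Function.comp_apply, submatrix_apply]
  ring_nf
  exact congrArg _ (Finset.sum_congr rfl fun _ _ => by ring)

theorem IsHermitian.star_dotProduct_mulVec_eq_of_leadingBlock
    {S : Matrix (Fin (n + 1)) (Fin (n + 1)) ℂ} (hS : S.IsHermitian) {w : Fin n → ℂ}
    (hw : S.leadingBlock *ᵥ w = S.borderColumn) (x : Fin (n + 1) → ℂ) :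
    star x ⬝ᵥ S *ᵥ x = star (x ∘ Fin.castSucc + x (Fin.last n) • w) ⬝ᵥ
        S.leadingBlock *ᵥ (x ∘ Fin.castSucc + x (Fin.last n) • w)
      + star (x (Fin.last n)) * x (Fin.last n)
        * (S (Fin.last n) (Fin.last n) - star w ⬝ᵥ S.borderColumn) := by
  have hrow : (fun j => S (Fin.last n) j.castSucc) = star S.borderColumn := by
    ext j
    exact (hS.apply _ _).symm
  have hherm : star w ⬝ᵥ S.leadingBlock *ᵥ x ∘ Fin.castSucc
      = star (S.leadingBlock *ᵥ w) ⬝ᵥ x ∘ Fin.castSucc := by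
    rw [star_mulVec, ← dotProduct_mulVec, (hS.submatrix _).eq]
  rw [star_dotProduct_mulVec_castSucc, hrow, ← hw]
  simp only [star_add, star_smul, mulVec_add, mulVec_smul, add_dotProduct, dotProduct_add,
    smul_dotProduct, dotProduct_smul, smul_eq_mul, hherm]
  ring

theorem PosDef.of_leadingBlock {S : Matrix (Fin (n + 1)) (Fin (n + 1)) ℂ} (hS : S.IsHermitian)
    (h₁ : S.leadingBlock.PosDef) {w : Fin n → ℂ} (hw : S.leadingBlock *ᵥ w = S.borderColumn)
    (hσ : (star w ⬝ᵥ S.borderColumn).re < (S (Fin.last n) (Fin.last n)).re) :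
    S.PosDef := by
  refine .of_dotProduct_mulVec_pos hS fun x hx => ?_
  set t := x (Fin.last n)
  set z := x ∘ Fin.castSucc + t • w
  have hre : 0 < (star x ⬝ᵥ S *ᵥ x).re := by
    have hlast : (star t * t * (S (Fin.last n) (Fin.last n) - star w ⬝ᵥ S.borderColumn)).re
        = Complex.normSq t * ((S (Fin.last n) (Fin.last n)).re
          - (star w ⬝ᵥ S.borderColumn).re) := by
      rw [Complex.star_def, ← Complex.normSq_eq_conj_mul_self, Complex.re_ofReal_mul,
        Complex.sub_re]
    rw [hS.star_dotProduct_mulVec_eq_of_leadingBlock hw, Complex.add_re, hlast]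
    by_cases ht : t = 0
    · have hz : z ≠ 0 := by
        refine fun hz => hx (funext fun i => ?_)
        cases i using Fin.lastCases with
        | last => exact ht
        | cast i => simpa [z, ht] using congrFun hz i
      simpa only [ht, map_zero, zero_mul, add_zero, Complex.zero_re] using
        (Complex.lt_def.mp (h₁.dotProduct_mulVec_pos hz)).1
    · have hz := (Complex.le_def.mp (h₁.posSemidef.dotProduct_mulVec_nonneg z)).1
      rw [Complex.zero_re] at hz
      have := mul_pos (Complex.normSq_pos.mpr ht) (sub_pos.mpr hσ)
      linarith
  exact Complex.lt_def.mpr ⟨hre, (hS.im_star_dotProduct_mulVec_self x).symm⟩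

end Matrix

section Bordered

variable {n : ℕ} {S T : Matrix (Fin (n + 1)) (Fin (n + 1)) ℂ}

theorem lyapunov_leadingBlock (hT : T.IsUpperTriangular) (hL : S * T + Tᴴ * S + 1 = 0) :
    S.leadingBlock * T.leadingBlock + T.leadingBlockᴴ * S.leadingBlock + 1 = 0 := by
  ext i j
  have := congrFun (congrFun hL i.castSucc) j.castSucc
  simpa [mul_apply, Fin.sum_univ_castSucc, hT.apply_last_castSucc, one_apply] using this

theorem lyapunov_borderColumn (hT : T.IsUpperTriangular) (hL : S * T + Tᴴ * S + 1 = 0) :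
    S.leadingBlock *ᵥ T.borderColumn + T (Fin.last n) (Fin.last n) • S.borderColumn
      + T.leadingBlockᴴ *ᵥ S.borderColumn = 0 := by
  ext i
  have := congrFun (congrFun hL i.castSucc) (Fin.last n)
  simp only [Matrix.add_apply, mul_apply, Fin.sum_univ_castSucc, conjTranspose_apply,
    hT.apply_last_castSucc, star_zero, zero_mul, add_zero,
    one_apply_ne (Fin.castSucc_lt_last i).ne, Matrix.zero_apply] at this
  simp only [Pi.add_apply, mulVec, dotProduct, Pi.smul_apply, smul_eq_mul, submatrix_apply,
    conjTranspose_apply, Pi.zero_apply]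
  linear_combination this

theorem lyapunov_corner (hS : S.IsHermitian) (hL : S * T + Tᴴ * S + 1 = 0) :
    2 * (star S.borderColumn ⬝ᵥ T.borderColumn).re
      + 2 * (S (Fin.last n) (Fin.last n)).re * (T (Fin.last n) (Fin.last n)).re + 1 = 0 := by
  have hσ : (S (Fin.last n) (Fin.last n)).im = 0 := by
    have := congrArg Complex.im (hS.apply (Fin.last n) (Fin.last n))
    simp only [Complex.star_def, Complex.conj_im] at this
    linarith
  have hsc : star S.borderColumn ⬝ᵥ T.borderColumn
      = ∑ k : Fin n, S (Fin.last n) k.castSucc * T k.castSucc (Fin.last n) :=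
    Finset.sum_congr rfl fun k _ => by rw [Pi.star_apply, hS.apply]
  have hcs : ∑ k : Fin n, star (T k.castSucc (Fin.last n)) * S k.castSucc (Fin.last n)
      = star (star S.borderColumn ⬝ᵥ T.borderColumn) :=
    star_dotProduct _ _
  have := congrFun (congrFun hL (Fin.last n)) (Fin.last n)
  simp only [Matrix.add_apply, mul_apply, Fin.sum_univ_castSucc, conjTranspose_apply,
    one_apply_eq, Matrix.zero_apply, ← hsc, hcs] at this
  have := congrArg Complex.re this
  simp only [Complex.add_re, Complex.mul_re, Complex.star_def, Complex.conj_re, Complex.conj_im,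
    hσ, Complex.one_re, Complex.zero_re] at this
  linarith

theorem lyapunov_last_of_posDef_leadingBlock (hT : T.IsUpperTriangular)
    (hμ : (T (Fin.last n) (Fin.last n)).re < 0) (hS : S.IsHermitian)
    (hL : S * T + Tᴴ * S + 1 = 0) (h₁ : S.leadingBlock.PosDef) :
    S.PosDef ∧ -1 / (2 * (T (Fin.last n) (Fin.last n)).re) ≤ (S (Fin.last n) (Fin.last n)).re ∧
      ((S (Fin.last n) (Fin.last n)).re = -1 / (2 * (T (Fin.last n) (Fin.last n)).re) →
        T.borderColumn = 0) := by
  obtain ⟨w, hw⟩ := mulVec_surjective_iff_isUnit.mpr h₁.isUnit S.borderColumn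
  have hv := lyapunov_borderColumn hT hL
  have key := lyapunov_re_star_dotProduct_border h₁.isHermitian (lyapunov_leadingBlock hT hL) hw hv
  have hcorner := lyapunov_corner hS hL
  have ha : 0 ≤ (star w ⬝ᵥ S.borderColumn).re := by
    rw [← hw]
    exact (Complex.le_def.mp (h₁.posSemidef.dotProduct_mulVec_nonneg w)).1
  have hg := Complex.le_def.mp (dotProduct_star_self_nonneg w)
  simp only [Complex.zero_re, Complex.zero_im] at hg
  refine ⟨h₁.of_leadingBlock hS hw (by nlinarith), ?_, fun heq => ?_⟩
  · rw [div_le_iff_of_neg (by linarith)]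
    nlinarith
  · have hg0 : (star w ⬝ᵥ w).re = 0 := by
      have : 2 * (-1 / (2 * (T (Fin.last n) (Fin.last n)).re)) * (T (Fin.last n) (Fin.last n)).re
          = -1 := by field_simp [hμ.ne]
      rw [heq, this] at hcorner
      nlinarith [mul_nonneg (neg_nonneg.mpr hμ.le) ha]
    have hw0 : w = 0 := dotProduct_star_self_eq_zero.mp (Complex.ext hg0 hg.2.symm)
    rw [← hw, hw0, mulVec_zero, smul_zero, mulVec_zero, add_zero, add_zero] at hv
    exact mulVec_injective_iff_isUnit.mpr h₁.isUnit (hv.trans (mulVec_zero _).symm)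

end Bordered

theorem lyapunov_posDef_and_diag_bound : ∀ {n : ℕ} {T S : Matrix (Fin n) (Fin n) ℂ},
    T.IsUpperTriangular → (∀ i, (T i i).re < 0) → S.IsHermitian → S * T + Tᴴ * S + 1 = 0 →
    S.PosDef ∧ ∀ k, -1 / (2 * (T k k).re) ≤ (S k k).re ∧
      ((S k k).re = -1 / (2 * (T k k).re) → ∀ j < k, T j k = 0)
  | 0, _, _, _, _, hS, _ =>
    ⟨.of_dotProduct_mulVec_pos hS fun x hx => absurd (Subsingleton.elim x 0) hx, fun k => k.elim0⟩
  | n + 1, T, S, hT, hRe, hS, hL => by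
    obtain ⟨h₁, hk⟩ := lyapunov_posDef_and_diag_bound hT.leadingBlock (fun i => hRe _)
      (hS.submatrix _) (lyapunov_leadingBlock hT hL)
    obtain ⟨hPD, hbound, heq⟩ := lyapunov_last_of_posDef_leadingBlock hT (hRe _) hS hL h₁
    refine ⟨hPD, fun k => ?_⟩
    cases k using Fin.lastCases with
    | last =>
      refine ⟨hbound, fun h j hj => ?_⟩
      obtain ⟨j, rfl⟩ := Fin.exists_castSucc_eq.mpr hj.ne
      exact congrFun (heq h) j
    | cast i =>
      refine ⟨(hk i).1, fun h j hj => ?_⟩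
      obtain ⟨j, rfl⟩ := Fin.exists_castSucc_eq.mpr (hj.trans (Fin.castSucc_lt_last i)).ne
      exact (hk i).2 h j (Fin.castSucc_lt_castSucc_iff.mp hj)

theorem Matrix.IsUpperTriangular.lyapunov_sum_re_eq_iff_isDiag {n : ℕ}
    {S T : Matrix (Fin n) (Fin n) ℂ} (hT : T.IsUpperTriangular) (hRe : ∀ i, (T i i).re < 0)
    (hS : S.IsHermitian) (hL : S * T + Tᴴ * S + 1 = 0) :
    ∑ k, (S k k).re = -∑ k, 1 / (2 * (T k k).re) ↔ T.IsDiag := by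
  obtain ⟨-, hk⟩ := lyapunov_posDef_and_diag_bound hT hRe hS hL
  simp only [← Finset.sum_neg_distrib, ← neg_div]
  rw [eq_comm, Finset.sum_eq_sum_iff_of_le fun k _ => (hk k).1]
  refine ⟨fun h i j hij => hij.lt_or_gt.elim
    (fun hlt => (hk j).2 (h j (Finset.mem_univ _)).symm i hlt) (hT ·),
    fun hd k _ => (hd.re_apply_of_lyapunov hL (hRe k).ne).symm⟩

/-- For `A` Hurwitz and `P` the unique solution of `P·A + Aᵀ·P + I = 0`,
`trace(P) = -∑ᵢ 1/(2 Re λᵢ(A))` holds if and only if `A` is normal. -/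
theorem trace_lyapunov_eq_iff_normal {n : ℕ} (A P : Matrix (Fin n) (Fin n) ℝ)
    (hHurwitz : ∀ μ ∈ (A.map (Complex.ofReal)).charpoly.roots, μ.re < 0)
    (hP : P * A + Aᵀ * P + 1 = 0) :
    P.trace = -((A.map (Complex.ofReal)).charpoly.roots.map (fun μ => 1 / (2 * μ.re))).sum ↔
      Aᵀ * A = A * Aᵀ := by
  obtain ⟨Q, hQs, hQ, htr⟩ := exists_isSymm_lyapunov hP
  obtain ⟨U, hU, hT⟩ := (A.map Complex.ofReal).exists_mem_unitaryGroup_isUpperTriangular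
  set u : unitary (Matrix (Fin n) (Fin n) ℂ) := star ⟨U, hU⟩
  set φ := Unitary.conjStarAlgAut ℂ _ u
  rw [show star U * A.map Complex.ofReal * U = φ (A.map Complex.ofReal) by simp [φ, u]] at hT
  have hroots : (A.map Complex.ofReal).charpoly.roots
      = Finset.univ.val.map fun i => φ (A.map Complex.ofReal) i i := by
    rw [← charpoly_conjStarAlgAut u, hT.charpoly_roots]
  have hRe : ∀ i, (φ (A.map Complex.ofReal) i i).re < 0 := fun i =>
    hHurwitz _ (hroots ▸ Multiset.mem_map_of_mem _ (Finset.mem_univ i))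
  have htrace : P.trace = ∑ k, (φ (Q.map Complex.ofReal) k k).re := by
    rw [← Complex.re_sum, ← htr]
    change _ = (trace (φ (Q.map Complex.ofReal))).re
    rw [trace_conjStarAlgAut]
    simp [trace]
  have hS := (hQs.isHermitian_map_ofReal.isSelfAdjoint.map φ).isHermitian
  rw [htrace, hroots, Multiset.map_map, ← isStarNormal_map_ofReal_iff, ← φ.isStarNormal_iff]
  exact (hT.lyapunov_sum_re_eq_iff_isDiag hRe hS (φ.map_lyapunov (lyapunov_map_ofReal hQ))).trans
    ⟨IsDiag.isStarNormal, hT.isDiag_of_isStarNormal⟩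
end
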